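/- arXiv:1811.05824 — 2 statements merged into one kernel-verified Lean document; each statement's English description precedes it below -/
import Mathlib

section
/- Let F be a formal group law over O_K and let u be a stable endomorphism of F (u'(0) neither 0 nor a root of unity). If h(X₁,...,X_d) ∈ O_K⟦X₁,...,X_d⟧ satisfies h(0)=0 and h ∘ u = u ∘ h (substituting u in each variable), then there exist a₁,...,a_d ∈ O_K such that h(X₁,...,X_d) = [a₁](X₁) ⊕ ⋯ ⊕ [a_d](X_d), where ⊕ denotes formal group addition and [a_i] is the endomorphism of F with derivative a_i at 0. -/
open MvPowerSeries

/-- Substitution of `k` power series (each with zero constant term) into a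
power series in `k` variables: the coefficient of a monomial `m` in
`f(g 0, ..., g (k-1))`. The sum is finite since each `g i` has zero constant term,
so only exponents `e` of total degree at most the degree of `m` contribute. -/
noncomputable def msubst {R : Type*} [CommRing R] {k l : ℕ}
    (f : MvPowerSeries (Fin k) R) (g : Fin k → MvPowerSeries (Fin l) R) :
    MvPowerSeries (Fin l) R :=
  fun m => ∑ e ∈ Finset.Iic (Finsupp.equivFunOnFinite.symm
      (fun _ : Fin k => m.sum fun _ n => n)),
    (MvPowerSeries.coeff (R := R) e f) * MvPowerSeries.coeff (R := R) m (∏ i, g i ^ e i)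

/-- One-variable power series, as multivariate power series in one variable. -/
abbrev PS (R : Type*) [CommRing R] := MvPowerSeries (Fin 1) R

/-- Composition `f ∘ g` of one-variable power series (`g` with zero constant term). -/
noncomputable def comp {R : Type*} [CommRing R] (f g : PS R) : PS R := msubst f ![g]

/-- The derivative at `0` of a one-variable power series, i.e. its linear coefficient. -/
noncomputable def d0 {R : Type*} [CommRing R] (f : PS R) : R :=
  MvPowerSeries.coeff (R := R) (Finsupp.single 0 1) f

/-- The partial derivative at `0` in the `i`-th variable, i.e. the linear coefficient. -/
noncomputable def pd0 {R : Type*} [CommRing R] {d : ℕ} (h : MvPowerSeries (Fin d) R)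
    (i : Fin d) : R := MvPowerSeries.coeff (R := R) (Finsupp.single i 1) h

/-- A one-variable power series `u ∈ X·R⟦X⟧` is stable if `u'(0)` is neither `0`
nor a root of unity. -/
def Stable {R : Type*} [CommRing R] (u : PS R) : Prop :=
  constantCoeff (R := R) u = 0 ∧ d0 u ≠ 0 ∧ ∀ n : ℕ, 0 < n → (d0 u) ^ n ≠ 1

/-- `h ∘ (u, ..., u)` : substitution of the one-variable series `u` in each of
the `d` variables of `h`. -/
noncomputable def compEach {R : Type*} [CommRing R] {d : ℕ}
    (h : MvPowerSeries (Fin d) R) (u : PS R) : MvPowerSeries (Fin d) R :=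
  msubst h (fun i => msubst u ![MvPowerSeries.X i])

/-- `u ∘ h` : substitution of `h` into the one-variable series `u`. -/
noncomputable def substIn {R : Type*} [CommRing R] {d : ℕ}
    (u : PS R) (h : MvPowerSeries (Fin d) R) : MvPowerSeries (Fin d) R :=
  msubst u ![h]

/-- A formal group law over `R`: `F(X,0) = X`, `F(0,Y) = Y` and
`F(F(X,Y),Z) = F(X,F(Y,Z))`. -/
structure IsFGL {R : Type*} [CommRing R] (F : MvPowerSeries (Fin 2) R) : Prop where
  left : ∀ n : ℕ, MvPowerSeries.coeff (R := R) (Finsupp.single 0 n) F = if n = 1 then 1 else 0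
  right : ∀ n : ℕ, MvPowerSeries.coeff (R := R) (Finsupp.single 1 n) F = if n = 1 then 1 else 0
  assoc : msubst F ![msubst F ![(X 0 : MvPowerSeries (Fin 3) R), X 1], X 2]
      = msubst F ![(X 0 : MvPowerSeries (Fin 3) R),
          msubst F ![(X 1 : MvPowerSeries (Fin 3) R), X 2]]

/-- `h` is a homomorphism of formal group laws from `F` to `G`:
`h(0) = 0` and `h(F(X,Y)) = G(h(X),h(Y))`. -/
def IsHomFGL {R : Type*} [CommRing R] (F G : MvPowerSeries (Fin 2) R) (h : PS R) : Prop :=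
  constantCoeff (R := R) h = 0 ∧
    msubst h ![F] = msubst G ![msubst h ![(X 0 : MvPowerSeries (Fin 2) R)],
      msubst h ![(X 1 : MvPowerSeries (Fin 2) R)]]

/-- `h` is an endomorphism of the formal group law `F`. -/
def IsEndoFGL {R : Type*} [CommRing R] (F : MvPowerSeries (Fin 2) R) (h : PS R) : Prop :=
  IsHomFGL F F h

/-- The formal-group sum `a ⊕ b` of two power series, for a formal group law `F`. -/
noncomputable def Fadd2 {R : Type*} [CommRing R] {d : ℕ} (F : MvPowerSeries (Fin 2) R)
    (a b : MvPowerSeries (Fin d) R) : MvPowerSeries (Fin d) R := msubst F ![a, b]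


namespace MyAux

variable {R : Type*} [CommRing R] {k l r d : ℕ}

lemma degree_sum {ι : Type*} (s : Finset ι) (f : ι → (ι' →₀ ℕ)) [DecidableEq ι'] :
    (∑ i ∈ s, f i).degree = ∑ i ∈ s, (f i).degree := by
  simp only [Finsupp.degree_eq_weight_one]
  exact map_sum _ _ _

lemma degree_add {ι' : Type*} (a b : ι' →₀ ℕ) : (a + b).degree = a.degree + b.degree := by
  simp only [Finsupp.degree_eq_weight_one]; exact map_add _ _ _

lemma degree_single {ι' : Type*} (i : ι') (n : ℕ) : (Finsupp.single i n).degree = n := by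
  classical
  rcases eq_or_ne n 0 with rfl | h
  · simp
  · exact Finsupp.degree_single i n

lemma degree_eq_sum_univ {k : ℕ} (e : Fin k →₀ ℕ) : e.degree = ∑ i, e i := by
  rw [Finsupp.degree_apply]
  exact Finset.sum_subset (Finset.subset_univ _)
    (fun i _ hi => Finsupp.notMem_support_iff.mp hi)

lemma msum_eq_degree {σ : Type*} (m : σ →₀ ℕ) : (m.sum fun _ n => n) = m.degree := rfl

variable {R : Type*} [CommRing R] {k l : ℕ}

/-- Product of many zero-constant-term series has vanishing low coefficients. -/
lemma coeff_prod_zero {ι : Type*} [DecidableEq ι] (s : Finset ι)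
    (f : ι → MvPowerSeries (Fin l) R) (hf : ∀ i ∈ s, constantCoeff (R := R) (f i) = 0)
    (m : Fin l →₀ ℕ) (hm : m.degree < s.card) :
    MvPowerSeries.coeff (R := R) m (∏ i ∈ s, f i) = 0 := by
  classical
  rw [MvPowerSeries.coeff_prod]
  apply Finset.sum_eq_zero
  intro lf hlf
  rw [Finset.mem_finsuppAntidiag] at hlf
  have : ∃ i ∈ s, lf i = 0 := by
    by_contra hc
    push_neg at hc
    have h1 : ∀ i ∈ s, 1 ≤ (lf i).degree := by
      intro i hi
      have := hc i hi
      rcases Nat.eq_zero_or_pos (lf i).degree with h0 | h0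
      · exact absurd ((Finsupp.degree_eq_zero_iff _).mp h0) this
      · exact h0
    have : (s.card : ℕ) ≤ m.degree := by
      calc (s.card : ℕ) = ∑ _i ∈ s, 1 := by simp
      _ ≤ ∑ i ∈ s, (lf i).degree := Finset.sum_le_sum h1
      _ = (∑ i ∈ s, lf i).degree := (degree_sum s lf).symm
      _ = m.degree := by rw [hlf.1]
    omega
  obtain ⟨i, hi, hi0⟩ := this
  apply Finset.prod_eq_zero hi
  rw [hi0]
  simpa using hf i hi

lemma coeff_prodpow_zero (g : Fin k → MvPowerSeries (Fin l) R)
    (hg : ∀ i, constantCoeff (R := R) (g i) = 0) (e : Fin k →₀ ℕ)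
    (m : Fin l →₀ ℕ) (hm : m.degree < e.degree) :
    MvPowerSeries.coeff (R := R) m (∏ i, g i ^ e i) = 0 := by
  classical
  have hprod : (∏ i, g i ^ e i)
      = ∏ x ∈ (Finset.univ : Finset (Fin k)).sigma (fun i => Finset.range (e i)),
          g x.1 := by
    rw [Finset.prod_sigma]
    simp [Finset.prod_const]
  rw [hprod]
  apply coeff_prod_zero _ _ (fun i _ => hg i.1)
  rw [Finset.card_sigma]
  simp only [Finset.card_range]
  rwa [← degree_eq_sum_univ]

/-- The master coefficient formula for `msubst`, with an arbitrary sufficiently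
large index set. -/
lemma coeff_msubst (f : MvPowerSeries (Fin k) R) (g : Fin k → MvPowerSeries (Fin l) R)
    (hg : ∀ i, constantCoeff (R := R) (g i) = 0) (m : Fin l →₀ ℕ)
    (E : Finset (Fin k →₀ ℕ)) (hE : ∀ e : Fin k →₀ ℕ, e.degree ≤ m.degree → e ∈ E) :
    MvPowerSeries.coeff (R := R) m (msubst f g)
      = ∑ e ∈ E, MvPowerSeries.coeff (R := R) e f * MvPowerSeries.coeff (R := R) m (∏ i, g i ^ e i) := by
  classical
  have hcoeff : MvPowerSeries.coeff (R := R) m (msubst f g)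
      = ∑ e ∈ Finset.Iic (Finsupp.equivFunOnFinite.symm
          (fun _ : Fin k => m.sum fun _ n => n)),
        MvPowerSeries.coeff (R := R) e f * MvPowerSeries.coeff (R := R) m (∏ i, g i ^ e i) := rfl
  rw [hcoeff]
  set c : Fin k →₀ ℕ := Finsupp.equivFunOnFinite.symm (fun _ : Fin k => m.sum fun _ n => n)
    with hc
  have hzero : ∀ e : Fin k →₀ ℕ, ¬ e.degree ≤ m.degree →
      MvPowerSeries.coeff (R := R) e f * MvPowerSeries.coeff (R := R) m (∏ i, g i ^ e i) = 0 := by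
    intro e he
    rw [coeff_prodpow_zero g hg e m (by omega), mul_zero]
  rw [← Finset.sum_filter_of_ne (f := fun e =>
      MvPowerSeries.coeff (R := R) e f * MvPowerSeries.coeff (R := R) m (∏ i, g i ^ e i))
      (p := fun e => e.degree ≤ m.degree)
      (by intro x _ hx; by_contra hcon; exact hx (hzero x hcon))]
  apply Finset.sum_subset
  · intro e he
    rw [Finset.mem_filter] at he
    exact hE e he.2
  · intro e _ he
    apply hzero
    intro hdeg
    apply he
    rw [Finset.mem_filter]
    refine ⟨?_, hdeg⟩
    rw [Finset.mem_Iic, Finsupp.le_def]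
    intro i
    rw [hc]
    simp only [Finsupp.coe_equivFunOnFinite_symm, msum_eq_degree]
    exact le_trans (Finsupp.le_degree i e) hdeg


/-- The truncation of a multivariate power series to a polynomial of total degree `≤ n`. -/
noncomputable def Dn (k n : ℕ) : Finset (Fin k →₀ ℕ) :=
  Finset.filter (fun e => e.degree ≤ n)
    (Finset.Iic (Finsupp.equivFunOnFinite.symm (fun _ : Fin k => n)))

lemma mem_Dn {k n : ℕ} (e : Fin k →₀ ℕ) : e ∈ Dn k n ↔ e.degree ≤ n := by
  constructor
  · intro h; exact (Finset.mem_filter.mp h).2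
  · intro h
    rw [Dn, Finset.mem_filter]
    refine ⟨?_, h⟩
    rw [Finset.mem_Iic, Finsupp.le_def]
    intro i
    simp only [Finsupp.coe_equivFunOnFinite_symm]
    exact le_trans (Finsupp.le_degree i e) h

noncomputable def truncP (n : ℕ) (f : MvPowerSeries (Fin k) R) : MvPolynomial (Fin k) R :=
  ∑ e ∈ Dn k n, MvPolynomial.monomial e (MvPowerSeries.coeff (R := R) e f)

lemma coeff_truncP (n : ℕ) (f : MvPowerSeries (Fin k) R) (e : Fin k →₀ ℕ) :
    (truncP n f).coeff e = if e.degree ≤ n then MvPowerSeries.coeff (R := R) e f else 0 := by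
  classical
  rw [truncP, MvPolynomial.coeff_sum]
  simp_rw [MvPolynomial.coeff_monomial]
  rw [Finset.sum_ite_eq' (Dn k n) e (fun e' => MvPowerSeries.coeff (R := R) e' f)]
  simp only [mem_Dn]

lemma aeval_eq_sum (P : MvPolynomial (Fin k) R) (g : Fin k → MvPowerSeries (Fin l) R)
    (S : Finset (Fin k →₀ ℕ)) (hS : P.support ⊆ S) :
    MvPolynomial.aeval g P = ∑ e ∈ S, (P.coeff e) • ∏ i, g i ^ e i := by
  conv_lhs => rw [MvPolynomial.as_sum P]
  rw [map_sum]
  rw [Finset.sum_subset hS]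
  · apply Finset.sum_congr rfl
    intro e _
    rw [MvPolynomial.aeval_monomial, Finsupp.prod_fintype _ _ (fun i => pow_zero _),
      ← c_eq_algebraMap, ← smul_eq_C_mul]
  · intro e _ he
    rw [MvPolynomial.notMem_support_iff.mp he]
    simp

lemma coeff_aeval (P : MvPolynomial (Fin k) R) (g : Fin k → MvPowerSeries (Fin l) R)
    (S : Finset (Fin k →₀ ℕ)) (hS : P.support ⊆ S) (m : Fin l →₀ ℕ) :
    MvPowerSeries.coeff (R := R) m (MvPolynomial.aeval g P)
      = ∑ e ∈ S, P.coeff e * MvPowerSeries.coeff (R := R) m (∏ i, g i ^ e i) := by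
  rw [aeval_eq_sum P g S hS, map_sum]
  apply Finset.sum_congr rfl
  intro e _
  rw [MvPowerSeries.coeff_smul]

/-- Lemma A : two polynomials agreeing in low degrees give the same low coefficients
after substitution of zero-constant-term power series. -/
lemma coeff_aeval_congr (P Q : MvPolynomial (Fin k) R)
    (g : Fin k → MvPowerSeries (Fin l) R) (hg : ∀ i, constantCoeff (R := R) (g i) = 0)
    {n : ℕ} (hPQ : ∀ e : Fin k →₀ ℕ, e.degree ≤ n → P.coeff e = Q.coeff e)
    (m : Fin l →₀ ℕ) (hm : m.degree ≤ n) :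
    MvPowerSeries.coeff (R := R) m (MvPolynomial.aeval g P)
      = MvPowerSeries.coeff (R := R) m (MvPolynomial.aeval g Q) := by
  classical
  rw [coeff_aeval P g (P.support ∪ Q.support) Finset.subset_union_left m,
    coeff_aeval Q g (P.support ∪ Q.support) Finset.subset_union_right m]
  apply Finset.sum_congr rfl
  intro e _
  by_cases hd : e.degree ≤ n
  · rw [hPQ e hd]
  · rw [coeff_prodpow_zero g hg e m (by omega), mul_zero, mul_zero]

/-- Lemma M : `msubst` agrees with polynomial evaluation of truncations. -/
lemma coeff_msubst_eq_aeval_truncP (f : MvPowerSeries (Fin k) R)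
    (g : Fin k → MvPowerSeries (Fin l) R) (hg : ∀ i, constantCoeff (R := R) (g i) = 0)
    (m : Fin l →₀ ℕ) {n : ℕ} (hm : m.degree ≤ n) :
    MvPowerSeries.coeff (R := R) m (msubst f g)
      = MvPowerSeries.coeff (R := R) m (MvPolynomial.aeval g (truncP n f)) := by
  classical
  rw [coeff_msubst f g hg m (Dn k n) (fun e he => (mem_Dn e).mpr (le_trans he hm))]
  rw [coeff_aeval (truncP n f) g (Dn k n)]
  · apply Finset.sum_congr rfl
    intro e he
    rw [coeff_truncP, if_pos ((mem_Dn e).mp he)]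
  · intro e he
    rw [MvPolynomial.mem_support_iff, coeff_truncP] at he
    rw [mem_Dn]
    by_contra hc
    rw [if_neg hc] at he
    exact he rfl

lemma msubst_add (f₁ f₂ : MvPowerSeries (Fin k) R) (g : Fin k → MvPowerSeries (Fin l) R) :
    msubst (f₁ + f₂) g = msubst f₁ g + msubst f₂ g := by
  ext m
  have : MvPowerSeries.coeff (R := R) m (msubst (f₁ + f₂) g)
      = MvPowerSeries.coeff (R := R) m (msubst f₁ g) + MvPowerSeries.coeff (R := R) m (msubst f₂ g) := by
    simp only [msubst, MvPowerSeries.coeff_apply, map_add, add_mul, Finset.sum_add_distrib]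
  simpa using this

lemma msubst_zero_left (g : Fin k → MvPowerSeries (Fin l) R) : msubst 0 g = 0 := by
  ext m
  have : MvPowerSeries.coeff (R := R) m (msubst (0 : MvPowerSeries (Fin k) R) g) = 0 := by
    simp only [msubst, MvPowerSeries.coeff_apply, map_zero, zero_mul, Finset.sum_const_zero]
  simpa using this

lemma msubst_mul (f₁ f₂ : MvPowerSeries (Fin k) R) (g : Fin k → MvPowerSeries (Fin l) R)
    (hg : ∀ i, constantCoeff (R := R) (g i) = 0) :
    msubst (f₁ * f₂) g = msubst f₁ g * msubst f₂ g := by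
  classical
  ext m
  set N := m.degree with hN
  rw [coeff_msubst_eq_aeval_truncP (f₁ * f₂) g hg m (le_refl N)]
  rw [coeff_aeval_congr (truncP N (f₁ * f₂)) (truncP N f₁ * truncP N f₂) g hg
    (n := N) ?_ m (le_refl N)]
  · rw [map_mul, MvPowerSeries.coeff_mul, MvPowerSeries.coeff_mul]
    apply Finset.sum_congr rfl
    intro pq hpq
    rw [Finset.HasAntidiagonal.mem_antidiagonal] at hpq
    have h1 : (pq.1).degree ≤ N := by
      rw [hN, ← hpq, degree_add]; omega
    have h2 : (pq.2).degree ≤ N := by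
      rw [hN, ← hpq, degree_add]; omega
    rw [← coeff_msubst_eq_aeval_truncP f₁ g hg pq.1 h1,
      ← coeff_msubst_eq_aeval_truncP f₂ g hg pq.2 h2]
  · intro e he
    rw [coeff_truncP, if_pos he, MvPolynomial.coeff_mul, MvPowerSeries.coeff_mul]
    apply Finset.sum_congr rfl
    intro pq hpq
    rw [Finset.HasAntidiagonal.mem_antidiagonal] at hpq
    have h1 : (pq.1).degree ≤ N := by
      have := degree_add pq.1 pq.2
      rw [hpq] at this; omega
    have h2 : (pq.2).degree ≤ N := by
      have := degree_add pq.1 pq.2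
      rw [hpq] at this; omega
    rw [coeff_truncP, coeff_truncP, if_pos h1, if_pos h2]


lemma prodPow_single (g : Fin k → MvPowerSeries (Fin l) R) (j : Fin k) (c : ℕ) :
    (∏ i, g i ^ (Finsupp.single j c) i) = g j ^ c := by
  classical
  rw [Finset.prod_eq_single j]
  · rw [Finsupp.single_eq_same]
  · intro i _ hij
    rw [Finsupp.single_eq_of_ne (hij), pow_zero]
  · intro h; exact absurd (Finset.mem_univ j) h

lemma prod_X_pow (e : Fin k →₀ ℕ) :
    (∏ i, (X i : MvPowerSeries (Fin k) R) ^ e i) = monomial (R := R) e 1 := by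
  classical
  have : ∀ s : Finset (Fin k), (∏ i ∈ s, (X i : MvPowerSeries (Fin k) R) ^ e i)
      = monomial (R := R) (∑ i ∈ s, Finsupp.single i (e i)) 1 := by
    intro s
    induction s using Finset.induction_on with
    | empty => simp [monomial_zero_one]
    | @insert a s ha ih =>
      rw [Finset.prod_insert ha, Finset.sum_insert ha, ih, X_pow_eq,
        monomial_mul_monomial, one_mul]
  rw [this Finset.univ, Finsupp.univ_sum_single]

lemma msubst_C (a : R) (g : Fin k → MvPowerSeries (Fin l) R)
    (hg : ∀ i, constantCoeff (R := R) (g i) = 0) :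
    msubst (C (σ := Fin k) (R := R) a) g = C (σ := Fin l) (R := R) a := by
  classical
  ext m
  rw [coeff_msubst _ g hg m (Dn k m.degree) (fun e he => (mem_Dn e).mpr he)]
  rw [Finset.sum_eq_single 0]
  · have h1 : (∏ i, g i ^ (0 : Fin k →₀ ℕ) i) = 1 := by simp
    rw [h1, coeff_C, coeff_C, coeff_one, if_pos rfl]
    split_ifs <;> simp
  · intro e _ he
    rw [coeff_C, if_neg he, zero_mul]
  · intro h
    exact absurd ((mem_Dn 0).mpr (by simp)) h

lemma msubst_one (g : Fin k → MvPowerSeries (Fin l) R)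
    (hg : ∀ i, constantCoeff (R := R) (g i) = 0) :
    msubst (1 : MvPowerSeries (Fin k) R) g = 1 := by
  have := msubst_C (1 : R) g hg
  simpa using this

lemma msubst_X (g : Fin k → MvPowerSeries (Fin l) R)
    (hg : ∀ i, constantCoeff (R := R) (g i) = 0) (j : Fin k) :
    msubst (X j) g = g j := by
  classical
  ext m
  rw [coeff_msubst _ g hg m (insert (Finsupp.single j 1) (Dn k m.degree))
    (fun e he => Finset.mem_insert_of_mem ((mem_Dn e).mpr he))]
  rw [Finset.sum_eq_single (Finsupp.single j 1)]
  · rw [coeff_X, if_pos rfl, one_mul, prodPow_single, pow_one]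
  · intro e _ he
    rw [coeff_X, if_neg he, zero_mul]
  · intro h
    exact absurd (Finset.mem_insert_self _ _) h

lemma msubst_pow (f : MvPowerSeries (Fin k) R) (g : Fin k → MvPowerSeries (Fin l) R)
    (hg : ∀ i, constantCoeff (R := R) (g i) = 0) (c : ℕ) :
    msubst (f ^ c) g = (msubst f g) ^ c := by
  induction c with
  | zero => simpa using msubst_one g hg
  | succ c ih => rw [pow_succ, pow_succ, msubst_mul _ _ g hg, ih]

lemma msubst_constantCoeff (f : MvPowerSeries (Fin k) R)
    (g : Fin k → MvPowerSeries (Fin l) R) (hg : ∀ i, constantCoeff (R := R) (g i) = 0) :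
    constantCoeff (R := R) (msubst f g) = constantCoeff (R := R) f := by
  classical
  rw [← coeff_zero_eq_constantCoeff, ← coeff_zero_eq_constantCoeff]
  rw [coeff_msubst f g hg 0 {0} (fun e he => by
    simp only [map_zero, Nat.le_zero] at he
    rw [Finset.mem_singleton]
    exact (Finsupp.degree_eq_zero_iff e).mp he)]
  rw [Finset.sum_singleton]
  simp

lemma msubst_X_fun (f : MvPowerSeries (Fin k) R) :
    msubst f (fun i => (X i : MvPowerSeries (Fin k) R)) = f := by
  classical
  ext m
  rw [coeff_msubst f _ (fun i => by simp) m (Dn k m.degree) (fun e he => (mem_Dn e).mpr he)]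
  rw [Finset.sum_eq_single m]
  · rw [prod_X_pow, coeff_monomial_same, mul_one]
  · intro e _ he
    rw [prod_X_pow, coeff_monomial, if_neg (by exact fun h => he h.symm), mul_zero]
  · intro h
    exact absurd ((mem_Dn m).mpr le_rfl) h

lemma msubst_aeval (P : MvPolynomial (Fin k) R)
    (g : Fin k → MvPowerSeries (Fin l) R) (h : Fin l → MvPowerSeries (Fin r) R)
    (hg : ∀ i, constantCoeff (R := R) (g i) = 0) (hh : ∀ j, constantCoeff (R := R) (h j) = 0) :
    msubst (MvPolynomial.aeval g P) h
      = MvPolynomial.aeval (fun i => msubst (g i) h) P := by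
  induction P using MvPolynomial.induction_on with
  | C a =>
      rw [MvPolynomial.aeval_C, MvPolynomial.aeval_C, ← c_eq_algebraMap, msubst_C a h hh,
        c_eq_algebraMap]
  | add p q ihp ihq => rw [map_add, msubst_add, ihp, ihq, map_add]
  | mul_X p i ih =>
      rw [map_mul, map_mul, MvPolynomial.aeval_X, MvPolynomial.aeval_X,
        msubst_mul _ _ h hh, ih]

lemma msubst_assoc (f : MvPowerSeries (Fin k) R)
    (g : Fin k → MvPowerSeries (Fin l) R) (h : Fin l → MvPowerSeries (Fin r) R)
    (hg : ∀ i, constantCoeff (R := R) (g i) = 0) (hh : ∀ j, constantCoeff (R := R) (h j) = 0) :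
    msubst (msubst f g) h = msubst f (fun i => msubst (g i) h) := by
  classical
  ext m
  set N := m.degree with hN
  have hg' : ∀ i, constantCoeff (R := R) (msubst (g i) h) = 0 := by
    intro i; rw [msubst_constantCoeff _ h hh]; exact hg i
  rw [coeff_msubst_eq_aeval_truncP (msubst f g) h hh m (le_refl N)]
  rw [coeff_aeval_congr (truncP N (msubst f g))
    (truncP N (MvPolynomial.aeval g (truncP N f))) h hh (n := N) ?_ m (le_refl N)]
  · rw [← coeff_msubst_eq_aeval_truncP (MvPolynomial.aeval g (truncP N f)) h hh m (le_refl N)]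
    rw [msubst_aeval (truncP N f) g h hg hh]
    rw [← coeff_msubst_eq_aeval_truncP f _ hg' m (le_refl N)]
  · intro e he
    rw [coeff_truncP, coeff_truncP, if_pos he, if_pos he]
    exact coeff_msubst_eq_aeval_truncP f g hg e he


lemma fin1_eq (m : Fin 1 →₀ ℕ) : m = Finsupp.single 0 (m 0) := by
  apply Finsupp.ext
  intro j
  have : j = 0 := Subsingleton.elim _ _
  subst this
  rw [Finsupp.single_eq_same]

lemma degree_fin1 (m : Fin 1 →₀ ℕ) : m.degree = m 0 := by
  conv_lhs => rw [fin1_eq m]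
  rw [degree_single]

lemma degree_eq_one {m : Fin d →₀ ℕ} (hm : m.degree = 1) :
    ∃ j, m = Finsupp.single j 1 := by
  classical
  have hne : m ≠ 0 := by
    intro h; rw [h] at hm; simp at hm
  obtain ⟨j, hj⟩ := Finsupp.support_nonempty_iff.mpr hne
  have hj1 : m j = 1 := by
    have h1 : 1 ≤ m j := Nat.one_le_iff_ne_zero.mpr (Finsupp.mem_support_iff.mp hj)
    have h2 := Finsupp.le_degree j m
    omega
  refine ⟨j, ?_⟩
  ext i
  rcases eq_or_ne i j with rfl | hij
  · rw [Finsupp.single_eq_same, hj1]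
  · rw [Finsupp.single_eq_of_ne (hij)]
    by_contra hc
    have hi : i ∈ m.support := Finsupp.mem_support_iff.mpr hc
    have hsub : ({i, j} : Finset (Fin d)) ⊆ m.support := by
      intro x hx
      rcases Finset.mem_insert.mp hx with rfl | hx
      · exact hi
      · rw [Finset.mem_singleton.mp hx]; exact hj
    have h1 : 1 ≤ m i := Nat.one_le_iff_ne_zero.mpr hc
    have hle : m i + m j ≤ m.degree := by
      have h2 := Finset.sum_le_sum_of_subset (f := fun x => m x) hsub
      rw [Finset.sum_pair hij] at h2
      exact le_trans h2 (le_of_eq rfl)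
    omega

/-- U2': coefficients of a one-variable series substituted in variable `i`. -/
lemma coeff_msubst_X (f : PS R) (i : Fin d) (q : Fin d →₀ ℕ) :
    MvPowerSeries.coeff (R := R) q (msubst f ![X i])
      = if q = Finsupp.single i (q i)
          then MvPowerSeries.coeff (R := R) (Finsupp.single 0 (q i)) f else 0 := by
  classical
  have hg : ∀ t : Fin 1, constantCoeff (R := R) ((![X i] : Fin 1 → MvPowerSeries (Fin d) R) t) = 0 := by
    intro t
    have : t = 0 := Subsingleton.elim _ _
    subst this
    simp
  rw [coeff_msubst f _ hg q (insert (Finsupp.single (0 : Fin 1) (q i)) (Dn 1 q.degree))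
    (fun e he => Finset.mem_insert_of_mem ((mem_Dn e).mpr he))]
  have hprod : ∀ e : Fin 1 →₀ ℕ,
      (∏ t, (![X i] : Fin 1 → MvPowerSeries (Fin d) R) t ^ e t) = (X i) ^ e 0 := by
    intro e
    rw [Fin.prod_univ_one]
    rfl
  split_ifs with hq
  · rw [Finset.sum_eq_single (Finsupp.single (0 : Fin 1) (q i))]
    · rw [hprod, Finsupp.single_eq_same, coeff_X_pow, if_pos hq, mul_one]
    · intro e _ he
      rw [hprod, coeff_X_pow, if_neg, mul_zero]
      intro hcon
      apply he
      have h2 : q i = e 0 := by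
        rw [hcon, Finsupp.single_eq_same]
      rw [h2]
      exact fin1_eq e
    · intro h
      exact absurd (Finset.mem_insert_self _ _) h
  · apply Finset.sum_eq_zero
    intro e _
    rw [hprod, coeff_X_pow, if_neg, mul_zero]
    intro hcon
    apply hq
    rw [hcon, Finsupp.single_eq_same]


/-- The "bottom coefficient" lemma: for `e` and `m` of the same total degree,
the coefficient of `X^m` in `∏ u(X_i)^{e_i}` is `(d0 u)^{deg m}` if `e = m`, else `0`. -/
lemma coeff_prod_uu (u : PS R) (hu0 : constantCoeff (R := R) u = 0) :
    ∀ (n : ℕ) (e m : Fin d →₀ ℕ), e.degree = n → m.degree = n →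
    MvPowerSeries.coeff (R := R) m (∏ i, (msubst u ![X i]) ^ e i)
      = if e = m then (d0 u) ^ n else 0 := by
  classical
  have hgu : ∀ i : Fin d, constantCoeff (R := R) (msubst u ![X i]) = 0 := by
    intro i
    rw [msubst_constantCoeff]
    · exact hu0
    · intro t
      have : t = 0 := Subsingleton.elim _ _
      subst this
      simp
  intro n
  induction n with
  | zero =>
    intro e m he hm
    rw [(Finsupp.degree_eq_zero_iff e).mp he, (Finsupp.degree_eq_zero_iff m).mp hm]
    simp
  | succ n ih =>
    intro e m he hm
    have hene : e ≠ 0 := by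
      intro h; rw [h] at he; simp at he
    obtain ⟨i, hi⟩ := Finsupp.support_nonempty_iff.mpr hene
    have hei : 1 ≤ e i := Nat.one_le_iff_ne_zero.mpr (Finsupp.mem_support_iff.mp hi)
    have hsle : Finsupp.single i 1 ≤ e := by
      rw [Finsupp.le_def]
      intro j
      rcases eq_or_ne j i with rfl | hji
      · rwa [Finsupp.single_eq_same]
      · rw [Finsupp.single_eq_of_ne (hji)]; exact Nat.zero_le _
    set e' : Fin d →₀ ℕ := e - Finsupp.single i 1 with he'def
    have hee' : e' + Finsupp.single i 1 = e := tsub_add_cancel_of_le hsle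
    have he' : e'.degree = n := by
      have := degree_add e' (Finsupp.single i 1)
      rw [hee', degree_single] at this
      omega
    have hsplit : (∏ j, (msubst u ![X j]) ^ e j)
        = (∏ j, (msubst u ![X j]) ^ e' j) * (msubst u ![X i]) := by
      rw [show (∏ j, msubst u ![X j] ^ e j)
          = ∏ j, (msubst u ![X j] ^ e' j * msubst u ![X j] ^ (Finsupp.single i 1) j)
        from Finset.prod_congr rfl (fun j _ => by
          rw [← pow_add, ← Finsupp.add_apply, hee'])]
      rw [Finset.prod_mul_distrib, prodPow_single (fun j => msubst u ![X j]) i 1, pow_one]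
    rw [hsplit, MvPowerSeries.coeff_mul]
    rcases Nat.eq_zero_or_pos (m i) with hmi | hmi
    · -- `m i = 0`, hence `e ≠ m` and each summand vanishes
      have hem : e ≠ m := by
        intro hcon; rw [hcon] at hei; omega
      rw [if_neg hem]
      apply Finset.sum_eq_zero
      intro pq hpq
      rw [Finset.HasAntidiagonal.mem_antidiagonal] at hpq
      rw [coeff_msubst_X]
      split_ifs with hq
      · have hqi : pq.2 i = 0 := by
          have : pq.1 i + pq.2 i = m i := by
            rw [← hpq]; rfl
          omega
        rw [hqi, ← coeff_zero_eq_constantCoeff] at *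
        rw [show (Finsupp.single (0 : Fin 1) 0) = 0 from Finsupp.single_zero 0, hu0, mul_zero]
      · rw [mul_zero]
    · -- `m i ≥ 1`
      have hmsle : Finsupp.single i 1 ≤ m := by
        rw [Finsupp.le_def]
        intro j
        rcases eq_or_ne j i with rfl | hji
        · rwa [Finsupp.single_eq_same]
        · rw [Finsupp.single_eq_of_ne (hji)]; exact Nat.zero_le _
      set m' : Fin d →₀ ℕ := m - Finsupp.single i 1 with hm'def
      have hmm' : m' + Finsupp.single i 1 = m := tsub_add_cancel_of_le hmsle
      have hm' : m'.degree = n := by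
        have := degree_add m' (Finsupp.single i 1)
        rw [hmm', degree_single] at this
        omega
      rw [Finset.sum_eq_single (m', Finsupp.single i 1)]
      · rw [coeff_msubst_X, if_pos (by rw [Finsupp.single_eq_same]),
          Finsupp.single_eq_same]
        have hd0 : MvPowerSeries.coeff (R := R) (Finsupp.single (0 : Fin 1) 1) u = d0 u := rfl
        rw [hd0, ih e' m' he' hm']
        have hiff : (e' = m') ↔ (e = m) := by
          constructor
          · intro hcon; rw [← hee', ← hmm', hcon]
          · intro hcon
            rw [he'def, hm'def, hcon]
        split_ifs with h1 h2 h3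
        · rw [pow_succ]
        · exact absurd (hiff.mp h1) h2
        · exact absurd (hiff.mpr h3) h1
        · rw [zero_mul]
      · intro pq hpq hne
        rw [Finset.HasAntidiagonal.mem_antidiagonal] at hpq
        rw [coeff_msubst_X]
        split_ifs with hq
        · -- pq.2 = single i (pq.2 i)
          rcases Nat.lt_or_ge (pq.2 i) 2 with hq2 | hq2
          · have h01 : pq.2 i = 0 ∨ pq.2 i = 1 := by omega
            rcases h01 with h | h
            · rw [h, ← coeff_zero_eq_constantCoeff] at *
              rw [show (Finsupp.single (0 : Fin 1) 0) = 0 from Finsupp.single_zero 0, hu0,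
                mul_zero]
            · exfalso
              apply hne
              have h2 : pq.2 = Finsupp.single i 1 := by rw [hq, h]
              have h1 : pq.1 = m' := by
                rw [hm'def]
                apply eq_tsub_of_add_eq
                rw [← h2, hpq]
              rw [← h1, ← h2]
          · -- pq.2 has degree ≥ 2, so pq.1 has degree < n = deg e'
            have hdq : (pq.2).degree = pq.2 i := by
              conv_lhs => rw [hq]
              rw [degree_single]
            have hdp : (pq.1).degree < n := by
              have := degree_add pq.1 pq.2
              rw [hpq] at this
              omega
            rw [coeff_prodpow_zero _ hgu e' pq.1 (by omega), zero_mul]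
        · rw [mul_zero]
      · intro h
        exfalso
        apply h
        rw [Finset.HasAntidiagonal.mem_antidiagonal]
        exact hmm'

/-- Two power series with zero constant term, equal linear part, both commuting
with a stable series `u`, are equal. -/
lemma comm_unique [IsDomain R] (u : PS R) (hu : Stable u)
    (g₁ g₂ : MvPowerSeries (Fin d) R)
    (h01 : constantCoeff (R := R) g₁ = 0) (h02 : constantCoeff (R := R) g₂ = 0)
    (hc1 : compEach g₁ u = substIn u g₁) (hc2 : compEach g₂ u = substIn u g₂)
    (hlin : ∀ j, pd0 g₁ j = pd0 g₂ j) : g₁ = g₂ := by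
  classical
  obtain ⟨hu0, hb0, hbroot⟩ := hu
  set b := d0 u with hbdef
  have hgu : ∀ i : Fin d, constantCoeff (R := R) (msubst u ![X i]) = 0 := by
    intro i
    rw [msubst_constantCoeff]
    · exact hu0
    · intro t
      have : t = 0 := Subsingleton.elim _ _
      subst this
      simp
  -- the key coefficient identity satisfied by any commuting series
  have key : ∀ (g : MvPowerSeries (Fin d) R), constantCoeff (R := R) g = 0 →
      compEach g u = substIn u g → ∀ (m : Fin d →₀ ℕ), 2 ≤ m.degree →
      MvPowerSeries.coeff (R := R) m g * b ^ m.degree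
        + (∑ e ∈ (Dn d m.degree).erase m,
            MvPowerSeries.coeff (R := R) e g
              * MvPowerSeries.coeff (R := R) m (∏ i, (msubst u ![X i]) ^ e i))
      = b * MvPowerSeries.coeff (R := R) m g
        + (∑ c ∈ (Finset.range (m.degree + 1)).erase 1,
            MvPowerSeries.coeff (R := R) (Finsupp.single 0 c) u
              * MvPowerSeries.coeff (R := R) m (g ^ c)) := by
    intro g hg0 hcg m hm2
    have hL : MvPowerSeries.coeff (R := R) m (compEach g u)
        = ∑ e ∈ Dn d m.degree, MvPowerSeries.coeff (R := R) e g
            * MvPowerSeries.coeff (R := R) m (∏ i, (msubst u ![X i]) ^ e i) := by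
      rw [compEach, coeff_msubst g _ hgu m (Dn d m.degree) (fun e he => (mem_Dn e).mpr he)]
    have hR : MvPowerSeries.coeff (R := R) m (substIn u g)
        = ∑ c ∈ Finset.range (m.degree + 1),
            MvPowerSeries.coeff (R := R) (Finsupp.single 0 c) u
              * MvPowerSeries.coeff (R := R) m (g ^ c) := by
      rw [substIn, coeff_msubst u _ (fun t => by
          have : t = 0 := Subsingleton.elim _ _
          subst this
          exact hg0) m
        ((Finset.range (m.degree + 1)).image (fun c => Finsupp.single (0 : Fin 1) c))
        (fun e he => by
          rw [Finset.mem_image]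
          exact ⟨e 0, Finset.mem_range.mpr (by
            rw [degree_fin1] at he; omega), (fin1_eq e).symm⟩)]
      rw [Finset.sum_image (fun a _ b _ h => Finsupp.single_injective 0 h)]
      apply Finset.sum_congr rfl
      intro c _
      rw [prodPow_single ![g] (0 : Fin 1) c]
      rfl
    have hcg' := congrArg (MvPowerSeries.coeff (R := R) m) hcg
    rw [hL, hR] at hcg'
    rw [← Finset.add_sum_erase _ _ ((mem_Dn m).mpr le_rfl)] at hcg'
    rw [← Finset.add_sum_erase _ _ (Finset.mem_range.mpr (by omega : 1 < m.degree + 1))] at hcg'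
    rw [coeff_prod_uu u hu0 m.degree m m rfl rfl, if_pos rfl] at hcg'
    rw [pow_one] at hcg'
    have hb : MvPowerSeries.coeff (R := R) (Finsupp.single (0:Fin 1) 1) u = b := rfl
    rw [hb] at hcg'
    exact hcg'
  -- now prove coefficientwise equality by strong induction on the degree
  have main : ∀ (n : ℕ) (m : Fin d →₀ ℕ), m.degree = n
      → MvPowerSeries.coeff (R := R) m g₁ = MvPowerSeries.coeff (R := R) m g₂ := by
    intro n
    induction n using Nat.strong_induction_on with
    | _ n ih =>
      intro m hmn
      match n, ih with
      | 0, _ =>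
        have : m = 0 := (Finsupp.degree_eq_zero_iff m).mp hmn
        subst this
        rw [coeff_zero_eq_constantCoeff]
        rw [h01, h02]
      | 1, _ =>
        obtain ⟨j, rfl⟩ := degree_eq_one hmn
        exact hlin j
      | (n + 2), ih =>
        have hm2 : 2 ≤ m.degree := by omega
        have k1 := key g₁ h01 hc1 m hm2
        have k2 := key g₂ h02 hc2 m hm2
        -- the two error sums agree by induction
        have hS : (∑ e ∈ (Dn d m.degree).erase m,
              MvPowerSeries.coeff (R := R) e g₁
                * MvPowerSeries.coeff (R := R) m (∏ i, (msubst u ![X i]) ^ e i))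
            = ∑ e ∈ (Dn d m.degree).erase m,
              MvPowerSeries.coeff (R := R) e g₂
                * MvPowerSeries.coeff (R := R) m (∏ i, (msubst u ![X i]) ^ e i) := by
          apply Finset.sum_congr rfl
          intro e he
          rcases Nat.lt_or_ge e.degree m.degree with hlt | hge
          · rw [ih e.degree (by omega) e rfl]
          · have hed : e.degree = m.degree :=
              le_antisymm ((mem_Dn e).mp (Finset.mem_of_mem_erase he)) hge
            rw [coeff_prod_uu u hu0 m.degree e m hed rfl,
              if_neg (Finset.ne_of_mem_erase he), mul_zero, mul_zero]
        have hT : (∑ c ∈ (Finset.range (m.degree + 1)).erase 1,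
              MvPowerSeries.coeff (R := R) (Finsupp.single 0 c) u
                * MvPowerSeries.coeff (R := R) m (g₁ ^ c))
            = ∑ c ∈ (Finset.range (m.degree + 1)).erase 1,
              MvPowerSeries.coeff (R := R) (Finsupp.single 0 c) u
                * MvPowerSeries.coeff (R := R) m (g₂ ^ c) := by
          apply Finset.sum_congr rfl
          intro c hc
          rcases Nat.lt_or_ge c 2 with hc2 | hc2
          · have hc01 : c = 0 := by
              have := Finset.ne_of_mem_erase hc
              omega
            subst hc01
            rw [show (Finsupp.single (0 : Fin 1) 0) = 0 from Finsupp.single_zero 0,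
              coeff_zero_eq_constantCoeff, hu0, zero_mul, zero_mul]
          · -- c ≥ 2 : coefficients of g^c only involve coefficients of degree < deg m
            congr 1
            rw [MvPowerSeries.coeff_pow, MvPowerSeries.coeff_pow]
            apply Finset.sum_congr rfl
            intro lf hlf
            rw [Finset.mem_finsuppAntidiag] at hlf
            by_cases hz : ∃ j ∈ Finset.range c, lf j = 0
            · obtain ⟨j, hj, hj0⟩ := hz
              rw [Finset.prod_eq_zero hj, Finset.prod_eq_zero hj]
              · rw [hj0, coeff_zero_eq_constantCoeff, h02]
              · rw [hj0, coeff_zero_eq_constantCoeff, h01]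
            · push_neg at hz
              apply Finset.prod_congr rfl
              intro j hj
              have hdle : (lf j).degree < m.degree := by
                have hsum : ∑ t ∈ Finset.range c, (lf t).degree = m.degree := by
                  rw [← degree_sum, hlf.1]
                have h1 : ∀ t ∈ (Finset.range c).erase j, 1 ≤ (lf t).degree := by
                  intro t ht
                  have := hz t (Finset.mem_of_mem_erase ht)
                  rcases Nat.eq_zero_or_pos (lf t).degree with h0 | h0
                  · exact absurd ((Finsupp.degree_eq_zero_iff _).mp h0) this
                  · exact h0
                have h2 : (Finset.range c).erase j ⊆ Finset.range c := Finset.erase_subset _ _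
                have h3 : ((Finset.range c).erase j).card
                    ≤ ∑ t ∈ (Finset.range c).erase j, (lf t).degree := by
                  calc ((Finset.range c).erase j).card
                      = ∑ _t ∈ (Finset.range c).erase j, 1 := by simp
                    _ ≤ _ := Finset.sum_le_sum h1
                have h4 : ((Finset.range c).erase j).card = c - 1 := by
                  rw [Finset.card_erase_of_mem hj, Finset.card_range]
                have h5 := hsum
                rw [← Finset.add_sum_erase _ (fun t => (lf t).degree) hj] at h5
                omega
              exact ih (lf j).degree (by omega) (lf j) rfl
        rw [hS, hT] at k1
        -- subtract the two identities
        have hsub : (MvPowerSeries.coeff (R := R) m g₁ - MvPowerSeries.coeff (R := R) m g₂)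
            * (b ^ m.degree - b) = 0 := by
          linear_combination k1 - k2
        rcases mul_eq_zero.mp hsub with h | h
        · exact sub_eq_zero.mp h
        · exfalso
          have hbn : b ^ m.degree - b = b * (b ^ (m.degree - 1) - 1) := by
            rw [mul_sub, mul_one]
            congr 1
            rw [← pow_succ']
            congr 1
            omega
          rw [hbn] at h
          rcases mul_eq_zero.mp h with h' | h'
          · exact hb0 h'
          · exact hbroot (m.degree - 1) (by omega) (by
              have := sub_eq_zero.mp h'
              exact this)
  ext m
  exact main m.degree m rfl

/-- Chain rule at the origin. -/
lemma pd0_msubst (f : MvPowerSeries (Fin k) R) (g : Fin k → MvPowerSeries (Fin l) R)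
    (hg : ∀ i, constantCoeff (R := R) (g i) = 0) (j : Fin l) :
    pd0 (msubst f g) j = ∑ i, pd0 f i * pd0 (g i) j := by
  classical
  rw [pd0, coeff_msubst f g hg (Finsupp.single j 1)
    (insert 0 (Finset.univ.image (fun i : Fin k => Finsupp.single i 1)))
    (fun e he => by
      rw [degree_single] at he
      rcases Nat.le_one_iff_eq_zero_or_eq_one.mp he with h0 | h1
      · rw [(Finsupp.degree_eq_zero_iff e).mp h0]
        exact Finset.mem_insert_self _ _
      · obtain ⟨i, rfl⟩ := degree_eq_one h1
        exact Finset.mem_insert_of_mem (Finset.mem_image_of_mem _ (Finset.mem_univ i)))]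
  rw [Finset.sum_insert (by
    rw [Finset.mem_image]
    rintro ⟨i, -, hcon⟩
    have := DFunLike.congr_fun hcon i
    rw [Finsupp.single_eq_same] at this
    simp at this)]
  have h0 : (∏ i, g i ^ (0 : Fin k →₀ ℕ) i) = 1 := by simp
  rw [h0, coeff_one, if_neg (by
    intro hcon
    have := DFunLike.congr_fun hcon j
    rw [Finsupp.single_eq_same] at this
    simp at this), mul_zero, zero_add]
  rw [Finset.sum_image (fun a _ b _ h => Finsupp.single_left_injective one_ne_zero h)]
  apply Finset.sum_congr rfl
  intro i _
  rw [prodPow_single g i 1, pow_one]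
  rfl

lemma msubst_zero_args (f : MvPowerSeries (Fin k) R)
    (hf : constantCoeff (R := R) f = 0) (g : Fin k → MvPowerSeries (Fin l) R)
    (hg0 : ∀ i, g i = 0) : msubst f g = 0 := by
  classical
  have hg : ∀ i, constantCoeff (R := R) (g i) = 0 := fun i => by rw [hg0 i]; simp
  ext m
  rw [coeff_msubst f g hg m (Dn k m.degree) (fun e he => (mem_Dn e).mpr he)]
  rw [map_zero]
  apply Finset.sum_eq_zero
  intro e _
  rcases eq_or_ne e 0 with rfl | hene
  · rw [← coeff_zero_eq_constantCoeff] at hf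
    rw [hf, zero_mul]
  · obtain ⟨i, hi⟩ := Finsupp.support_nonempty_iff.mpr hene
    rw [Finset.prod_eq_zero (Finset.mem_univ i)
      (by rw [hg0 i, zero_pow (Finsupp.mem_support_iff.mp hi)]), map_zero, mul_zero]

lemma vc1 {r : ℕ} {a : MvPowerSeries (Fin r) R} (ha : constantCoeff (R := R) a = 0) :
    ∀ t : Fin 1, constantCoeff (R := R) ((![a] : Fin 1 → MvPowerSeries (Fin r) R) t) = 0 := by
  intro t
  have ht : t = 0 := Subsingleton.elim _ _
  subst ht
  exact ha

lemma vc2 {r : ℕ} {a b : MvPowerSeries (Fin r) R} (ha : constantCoeff (R := R) a = 0)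
    (hb : constantCoeff (R := R) b = 0) :
    ∀ t : Fin 2, constantCoeff (R := R) ((![a, b] : Fin 2 → MvPowerSeries (Fin r) R) t) = 0 := by
  intro t
  fin_cases t <;> simpa

lemma massoc1 {k r : ℕ} (f : PS R) (w : MvPowerSeries (Fin k) R)
    (g : Fin k → MvPowerSeries (Fin r) R) (hw : constantCoeff (R := R) w = 0)
    (hg : ∀ i, constantCoeff (R := R) (g i) = 0) :
    msubst (msubst f ![w]) g = msubst f ![msubst w g] := by
  rw [msubst_assoc f ![w] g (vc1 hw) hg]
  exact congrArg (msubst f) (funext fun t => by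
    have ht : t = 0 := Subsingleton.elim _ _
    subst ht
    rfl)

lemma massoc₂ {k r : ℕ} (f : MvPowerSeries (Fin 2) R) (w₁ w₂ : MvPowerSeries (Fin k) R)
    (g : Fin k → MvPowerSeries (Fin r) R) (h1 : constantCoeff (R := R) w₁ = 0)
    (h2 : constantCoeff (R := R) w₂ = 0) (hg : ∀ i, constantCoeff (R := R) (g i) = 0) :
    msubst (msubst f ![w₁, w₂]) g = msubst f ![msubst w₁ g, msubst w₂ g] := by
  rw [msubst_assoc f ![w₁, w₂] g (vc2 h1 h2) hg]
  exact congrArg (msubst f) (funext fun t => by fin_cases t <;> rfl)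

lemma d0_eq_pd0 (f : PS R) : d0 f = pd0 f 0 := rfl

lemma pd0_X {r : ℕ} (s j : Fin r) :
    pd0 (X s : MvPowerSeries (Fin r) R) j = if j = s then 1 else 0 := by
  rw [pd0, coeff_X]
  rcases eq_or_ne j s with rfl | hjs
  · rw [if_pos rfl, if_pos rfl]
  · rw [if_neg hjs, if_neg (by
      intro hcon
      exact hjs ((Finsupp.single_left_inj one_ne_zero).mp hcon))]

lemma pd0_zero {r : ℕ} (j : Fin r) : pd0 (0 : MvPowerSeries (Fin r) R) j = 0 := by
  rw [pd0, map_zero]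

lemma pd0_msubst_vec1 {r : ℕ} (f : PS R) (w : MvPowerSeries (Fin r) R)
    (hw : constantCoeff (R := R) w = 0) (j : Fin r) :
    pd0 (msubst f ![w]) j = d0 f * pd0 w j := by
  rw [pd0_msubst f ![w] (vc1 hw) j, Fin.sum_univ_one]
  rfl

lemma pd0_msubst_vec2 {r : ℕ} (f : MvPowerSeries (Fin 2) R) (w₁ w₂ : MvPowerSeries (Fin r) R)
    (h1 : constantCoeff (R := R) w₁ = 0) (h2 : constantCoeff (R := R) w₂ = 0) (j : Fin r) :
    pd0 (msubst f ![w₁, w₂]) j = pd0 f 0 * pd0 w₁ j + pd0 f 1 * pd0 w₂ j := by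
  rw [pd0_msubst f ![w₁, w₂] (vc2 h1 h2) j, Fin.sum_univ_two]
  rfl

lemma msubst_X0 (u : PS R) : msubst u ![X 0] = u := by
  have hvec : (![X 0] : Fin 1 → PS R) = fun i => X i := by
    funext s
    have hs : s = 0 := Subsingleton.elim _ _
    subst hs
    rfl
  rw [hvec, msubst_X_fun]

lemma compEach_one (f u : PS R) : compEach f u = msubst f ![u] := by
  rw [compEach]
  exact congrArg (msubst f) (funext fun t => by
    have ht : t = 0 := Subsingleton.elim _ _
    subst ht
    exact msubst_X0 u)

lemma const_uu {r : ℕ} (u : PS R) (hu0 : constantCoeff (R := R) u = 0) (i : Fin r) :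
    constantCoeff (R := R) (msubst u ![X i]) = 0 := by
  rw [msubst_constantCoeff u _ (vc1 (constantCoeff_X i))]
  exact hu0

lemma msubst_zero_vec1 {r : ℕ} (u : PS R) (hu0 : constantCoeff (R := R) u = 0) :
    msubst u (![0] : Fin 1 → MvPowerSeries (Fin r) R) = 0 := by
  apply msubst_zero_args u hu0
  intro t
  have ht : t = 0 := Subsingleton.elim _ _
  subst ht
  rfl

/-- Stability of const-zero and commutation-with-`u` under formal group sums,
together with additivity of linear coefficients. -/
lemma fold_aux {d : ℕ} (F : MvPowerSeries (Fin 2) R) (u : PS R)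
    (hu0 : constantCoeff (R := R) u = 0) (hF0 : constantCoeff (R := R) F = 0)
    (hFu : msubst u ![F] = msubst F ![msubst u ![X 0], msubst u ![X 1]])
    (hpdF0 : pd0 F 0 = 1) (hpdF1 : pd0 F 1 = 1) (L : List (MvPowerSeries (Fin d) R)) :
    (∀ s ∈ L, constantCoeff (R := R) s = 0 ∧
      msubst s (fun i => msubst u ![X i]) = msubst u ![s]) →
    (constantCoeff (R := R) (L.foldr (Fadd2 F) 0) = 0 ∧
     msubst (L.foldr (Fadd2 F) 0) (fun i : Fin d => msubst u ![X i])
        = msubst u ![L.foldr (Fadd2 F) 0] ∧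
     ∀ j, pd0 (L.foldr (Fadd2 F) 0) j = (L.map (fun s => pd0 s j)).sum) := by
  have hgu : ∀ i : Fin d, constantCoeff (R := R) (msubst u ![X i]) = 0 := const_uu u hu0
  induction L with
  | nil =>
    intro _
    refine ⟨map_zero _, ?_, ?_⟩
    · rw [List.foldr_nil, msubst_zero_left, msubst_zero_vec1 u hu0]
    · intro j
      rw [List.foldr_nil, pd0_zero, List.map_nil, List.sum_nil]
  | cons s T ih =>
    intro hL
    obtain ⟨hs0, hsc⟩ := hL s (List.mem_cons_self)
    obtain ⟨hT0, hTc, hTp⟩ := ih (fun x hx => hL x (List.mem_cons_of_mem s hx))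
    rw [List.foldr_cons]
    set T' := T.foldr (Fadd2 F) 0 with hT'def
    have hF2 : Fadd2 F s T' = msubst F ![s, T'] := rfl
    refine ⟨?_, ?_, ?_⟩
    · rw [hF2, msubst_constantCoeff _ _ (vc2 hs0 hT0), hF0]
    · rw [hF2, massoc₂ F s T' _ hs0 hT0 hgu, hsc, hTc,
        ← massoc1 u F ![s, T'] hF0 (vc2 hs0 hT0), hFu,
        massoc₂ F _ _ ![s, T'] (const_uu u hu0 0) (const_uu u hu0 1) (vc2 hs0 hT0),
        massoc1 u (X 0) ![s, T'] (constantCoeff_X 0) (vc2 hs0 hT0),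
        massoc1 u (X 1) ![s, T'] (constantCoeff_X 1) (vc2 hs0 hT0),
        msubst_X ![s, T'] (vc2 hs0 hT0) 0, msubst_X ![s, T'] (vc2 hs0 hT0) 1]
      rfl
    · intro j
      rw [hF2, pd0_msubst_vec2 F s T' hs0 hT0 j, hpdF0, hpdF1, one_mul, one_mul,
        List.map_cons, List.sum_cons, hTp j]


/-- The `i`-th component series `h(0,...,X,...,0)`. -/
noncomputable def Acomp {R : Type*} [CommRing R] {d : ℕ} (h : MvPowerSeries (Fin d) R)
    (i : Fin d) : PS R := msubst h (fun j => if j = i then X 0 else 0)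

lemma Acomp_def {R : Type*} [CommRing R] {d : ℕ} (h : MvPowerSeries (Fin d) R) (i : Fin d) :
    Acomp h i = msubst h (fun j => if j = i then X 0 else 0) := rfl

/-- The main result, over an arbitrary domain. -/
lemma main_aux {R : Type*} [CommRing R] [IsDomain R] {d : ℕ}
    (F : MvPowerSeries (Fin 2) R) (hF : IsFGL F)
    (u : PS R) (huE : IsEndoFGL F u) (huS : Stable u)
    (h : MvPowerSeries (Fin d) R) (h0 : constantCoeff (R := R) h = 0)
    (hcomm : msubst h (fun i => msubst u ![X i]) = msubst u ![h]) :
    ∃ A : Fin d → PS R,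
      (∀ i, IsEndoFGL F (A i)) ∧
      (∃ a : Fin d → R, ∀ i, d0 (A i) = a i) ∧
      h = (List.ofFn fun i : Fin d =>
        msubst (A i) ![(MvPowerSeries.X i : MvPowerSeries (Fin d) R)]).foldr (Fadd2 F) 0 := by
  classical
  have hu0 : constantCoeff (R := R) u = 0 := huS.1
  have hFu : msubst u ![F] = msubst F ![msubst u ![X 0], msubst u ![X 1]] := huE.2
  have hF0 : constantCoeff (R := R) F = 0 := by
    have h1 := hF.left 0
    rw [if_neg (by norm_num), Finsupp.single_zero, coeff_zero_eq_constantCoeff] at h1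
    exact h1
  have hpdF0 : pd0 F 0 = 1 := by
    have h1 := hF.left 1
    rw [if_pos rfl] at h1
    exact h1
  have hpdF1 : pd0 F 1 = 1 := by
    have h1 := hF.right 1
    rw [if_pos rfl] at h1
    exact h1
  have hgu : ∀ (r : ℕ) (i : Fin r), constantCoeff (R := R) (msubst u ![X i]) = 0 :=
    fun r => const_uu u hu0
  have hFuu2 : msubst F (fun s : Fin 2 => msubst u ![X s]) = msubst u ![F] := by
    rw [hFu]
    exact congrArg (msubst F) (funext fun s => by fin_cases s <;> rfl)
  have hδc : ∀ i : Fin d, ∀ j : Fin d,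
      constantCoeff (R := R) ((fun j => if j = i then (X 0 : PS R) else 0) j) = 0 := by
    intro i j
    show constantCoeff (R := R) (if j = i then (X 0 : PS R) else 0) = 0
    rcases eq_or_ne j i with rfl | hji
    · rw [if_pos rfl]
      exact constantCoeff_X 0
    · rw [if_neg hji, map_zero]
  have hA0 : ∀ i, constantCoeff (R := R) (Acomp h i) = 0 := by
    intro i
    rw [Acomp_def, msubst_constantCoeff h _ (hδc i), h0]
  -- the component series commute with u
  have hmid1 : ∀ i, msubst (Acomp h i) ![u]
      = msubst h (fun j => if j = i then u else 0) := by
    intro i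
    rw [Acomp_def, msubst_assoc h _ ![u] (hδc i) (vc1 hu0)]
    apply congrArg (msubst h)
    funext j
    show msubst (if j = i then X 0 else 0) ![u] = (if j = i then u else 0)
    rcases eq_or_ne j i with rfl | hji
    · rw [if_pos rfl, if_pos rfl, msubst_X ![u] (vc1 hu0) 0]
      rfl
    · rw [if_neg hji, if_neg hji, msubst_zero_left]
  have hmid2 : ∀ i, msubst u ![Acomp h i]
      = msubst h (fun j => if j = i then u else 0) := by
    intro i
    have hc := congrArg
      (fun w => msubst w (fun j : Fin d => if j = i then (X 0 : PS R) else 0)) hcomm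
    rw [msubst_assoc h _ _ (hgu d) (hδc i)] at hc
    rw [massoc1 u h _ h0 (hδc i)] at hc
    rw [Acomp_def, ← hc]
    apply congrArg (msubst h)
    funext j
    show msubst (msubst u ![X j]) (fun j' => if j' = i then (X 0 : PS R) else 0)
        = (if j = i then u else 0)
    rw [massoc1 u (X j) _ (constantCoeff_X j) (hδc i), msubst_X _ (hδc i) j]
    show msubst u ![if j = i then (X 0 : PS R) else 0] = (if j = i then u else 0)
    rcases eq_or_ne j i with rfl | hji
    · rw [if_pos rfl, if_pos rfl, msubst_X0]
    · rw [if_neg hji, if_neg hji, msubst_zero_vec1 u hu0]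
  have hAiu : ∀ i, msubst (Acomp h i) ![u] = msubst u ![Acomp h i] := by
    intro i
    rw [hmid1 i, hmid2 i]
  -- linear coefficients of the component series
  have hAd0 : ∀ i, d0 (Acomp h i) = pd0 h i := by
    intro i
    rw [d0_eq_pd0, Acomp_def, pd0_msubst h _ (hδc i) 0]
    have hterm : ∀ j : Fin d,
        pd0 ((fun j' => if j' = i then (X 0 : PS R) else 0) j) (0 : Fin 1)
          = if j = i then 1 else 0 := by
      intro j
      show pd0 (if j = i then (X 0 : PS R) else 0) (0 : Fin 1) = if j = i then 1 else 0
      rcases eq_or_ne j i with rfl | hji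
      · rw [if_pos rfl, if_pos rfl, pd0_X, if_pos rfl]
      · rw [if_neg hji, if_neg hji, pd0_zero]
    rw [Finset.sum_congr rfl (fun j _ => by rw [hterm j])]
    simp [mul_ite, Finset.sum_ite_eq']
  -- the generic commutation of `Acomp h i ∘ X s` with `u` (in any arity)
  have hAX : ∀ (r : ℕ) (i : Fin d) (s : Fin r),
      msubst (msubst (Acomp h i) ![X s]) (fun t : Fin r => msubst u ![X t])
        = msubst u ![msubst (Acomp h i) ![X s]] := by
    intro r i s
    calc msubst (msubst (Acomp h i) ![X s]) (fun t : Fin r => msubst u ![X t])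
        = msubst (Acomp h i) ![msubst (X s) (fun t : Fin r => msubst u ![X t])] :=
          massoc1 (Acomp h i) (X s) _ (constantCoeff_X s) (hgu r)
      _ = msubst (Acomp h i) ![msubst u ![X s]] := by
          rw [msubst_X _ (hgu r) s]
      _ = msubst (msubst (Acomp h i) ![u]) ![X s] :=
          (massoc1 (Acomp h i) u ![X s] hu0 (vc1 (constantCoeff_X s))).symm
      _ = msubst (msubst u ![Acomp h i]) ![X s] := by rw [hAiu i]
      _ = msubst u ![msubst (Acomp h i) ![X s]] :=
          massoc1 u (Acomp h i) ![X s] (hA0 i) (vc1 (constantCoeff_X s))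
  -- each component series is an endomorphism of F
  have hAend : ∀ i, IsEndoFGL F (Acomp h i) := by
    intro i
    have hAX0c : constantCoeff (R := R) (msubst (Acomp h i) ![(X 0 : MvPowerSeries (Fin 2) R)]) = 0 := by
      rw [msubst_constantCoeff _ _ (vc1 (constantCoeff_X 0)), hA0 i]
    have hAX1c : constantCoeff (R := R) (msubst (Acomp h i) ![(X 1 : MvPowerSeries (Fin 2) R)]) = 0 := by
      rw [msubst_constantCoeff _ _ (vc1 (constantCoeff_X 1)), hA0 i]
    refine ⟨hA0 i, ?_⟩
    apply comm_unique u huS _ _ ?_ ?_ ?_ ?_ ?_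
    · rw [msubst_constantCoeff _ _ (vc1 hF0), hA0 i]
    · rw [msubst_constantCoeff _ _ (vc2 hAX0c hAX1c), hF0]
    · -- left side commutes with u
      show msubst (msubst (Acomp h i) ![F]) (fun s : Fin 2 => msubst u ![X s])
          = msubst u ![msubst (Acomp h i) ![F]]
      calc msubst (msubst (Acomp h i) ![F]) (fun s : Fin 2 => msubst u ![X s])
          = msubst (Acomp h i) ![msubst F (fun s : Fin 2 => msubst u ![X s])] :=
            massoc1 (Acomp h i) F _ hF0 (hgu 2)
        _ = msubst (Acomp h i) ![msubst u ![F]] := by rw [hFuu2]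
        _ = msubst (msubst (Acomp h i) ![u]) ![F] :=
            (massoc1 (Acomp h i) u ![F] hu0 (vc1 hF0)).symm
        _ = msubst (msubst u ![Acomp h i]) ![F] := by rw [hAiu i]
        _ = msubst u ![msubst (Acomp h i) ![F]] :=
            massoc1 u (Acomp h i) ![F] (hA0 i) (vc1 hF0)
    · -- right side commutes with u
      show msubst (msubst F ![msubst (Acomp h i) ![X 0], msubst (Acomp h i) ![X 1]])
            (fun s : Fin 2 => msubst u ![X s])
          = msubst u ![msubst F ![msubst (Acomp h i) ![X 0], msubst (Acomp h i) ![X 1]]]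
      calc msubst (msubst F ![msubst (Acomp h i) ![X 0], msubst (Acomp h i) ![X 1]])
            (fun s : Fin 2 => msubst u ![X s])
          = msubst F ![msubst (msubst (Acomp h i) ![X 0]) (fun s : Fin 2 => msubst u ![X s]),
              msubst (msubst (Acomp h i) ![X 1]) (fun s : Fin 2 => msubst u ![X s])] :=
            massoc₂ F _ _ _ hAX0c hAX1c (hgu 2)
        _ = msubst F ![msubst u ![msubst (Acomp h i) ![X 0]], msubst u ![msubst (Acomp h i) ![X 1]]] := by
            rw [hAX 2 i 0, hAX 2 i 1]
        _ = msubst (msubst F ![msubst u ![X 0], msubst u ![X 1]])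
              ![msubst (Acomp h i) ![X 0], msubst (Acomp h i) ![X 1]] := by
            rw [massoc₂ F (msubst u ![X 0]) (msubst u ![X 1]) _
              (hgu 2 0) (hgu 2 1) (vc2 hAX0c hAX1c),
              massoc1 u (X 0) _ (constantCoeff_X 0) (vc2 hAX0c hAX1c),
              massoc1 u (X 1) _ (constantCoeff_X 1) (vc2 hAX0c hAX1c),
              msubst_X _ (vc2 hAX0c hAX1c) 0, msubst_X _ (vc2 hAX0c hAX1c) 1]
            rfl
        _ = msubst (msubst u ![F]) ![msubst (Acomp h i) ![X 0], msubst (Acomp h i) ![X 1]] := by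
            rw [hFu]
        _ = msubst u ![msubst F ![msubst (Acomp h i) ![X 0], msubst (Acomp h i) ![X 1]]] :=
            massoc1 u F _ hF0 (vc2 hAX0c hAX1c)
    · -- equal linear parts
      intro j
      have hXj : pd0 (msubst (Acomp h i) ![F]) j = pd0 h i := by
        rw [pd0_msubst_vec1 (Acomp h i) F hF0 j, hAd0 i]
        have hpdFj : pd0 F j = 1 := by
          fin_cases j
          · exact hpdF0
          · exact hpdF1
        rw [hpdFj, mul_one]
      rw [hXj, pd0_msubst_vec2 F _ _ hAX0c hAX1c j,
        pd0_msubst_vec1 (Acomp h i) (X 0) (constantCoeff_X 0) j,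
        pd0_msubst_vec1 (Acomp h i) (X 1) (constantCoeff_X 1) j,
        hAd0 i, hpdF0, hpdF1, pd0_X, pd0_X]
      fin_cases j <;> simp
  -- assemble the formal-group sum
  set L : List (MvPowerSeries (Fin d) R) :=
    List.ofFn (fun i : Fin d => msubst (Acomp h i) ![(X i : MvPowerSeries (Fin d) R)]) with hLdef
  have hP : ∀ s ∈ L, constantCoeff (R := R) s = 0 ∧
      msubst s (fun i => msubst u ![X i]) = msubst u ![s] := by
    intro s hs
    rw [hLdef, List.mem_ofFn] at hs
    obtain ⟨i, rfl⟩ := hs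
    constructor
    · rw [msubst_constantCoeff _ _ (vc1 (constantCoeff_X i)), hA0 i]
    · exact hAX d i i
  obtain ⟨hH0, hHc, hHp⟩ := fold_aux F u hu0 hF0 hFu hpdF0 hpdF1 L hP
  refine ⟨Acomp h, hAend, ⟨fun i => d0 (Acomp h i), fun i => rfl⟩, ?_⟩
  apply comm_unique u huS h (L.foldr (Fadd2 F) 0) h0 hH0 ?_ ?_ ?_
  · exact hcomm
  · exact hHc
  · intro j
    rw [hHp j, hLdef, List.map_ofFn, Fin.sum_ofFn]
    have hterm : ∀ i : Fin d,
        ((fun s => pd0 s j) ∘ fun i => msubst (Acomp h i) ![(X i : MvPowerSeries (Fin d) R)]) i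
          = pd0 h i * (if j = i then 1 else 0) := by
      intro i
      show pd0 (msubst (Acomp h i) ![(X i : MvPowerSeries (Fin d) R)]) j = _
      rw [pd0_msubst_vec1 (Acomp h i) (X i) (constantCoeff_X i) j, hAd0 i, pd0_X]
    rw [Finset.sum_congr rfl (fun i _ => hterm i)]
    simp [mul_ite, Finset.sum_ite_eq']

end MyAux

variable (p : ℕ) [Fact p.Prime] (K : Type*) [Field K] [Algebra ℚ_[p] K]
  [Algebra ℤ_[p] K] [IsScalarTower ℤ_[p] ℚ_[p] K] [FiniteDimensional ℚ_[p] K]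

/-- A multivariate power series over the ring of integers of a `p`-adic field that
vanishes at `0` and commutes with a stable endomorphism `u` of a formal group law `F`
is a formal-group sum `[a₁](X₁) ⊕ ⋯ ⊕ [a_d](X_d)` of one-variable endomorphisms of
`F`. -/
theorem stmt4 {d : ℕ} (F : MvPowerSeries (Fin 2) (integralClosure ℤ_[p] K)) (hF : IsFGL F)
    (u : PS (integralClosure ℤ_[p] K)) (huE : IsEndoFGL F u) (huS : Stable u)
    (h : MvPowerSeries (Fin d) (integralClosure ℤ_[p] K)) (h0 : constantCoeff h = 0)
    (hcomm : compEach h u = substIn u h) :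
    ∃ A : Fin d → PS (integralClosure ℤ_[p] K),
      (∀ i, IsEndoFGL F (A i)) ∧
      (∃ a : Fin d → (integralClosure ℤ_[p] K), ∀ i, d0 (A i) = a i) ∧
      h = (List.ofFn fun i : Fin d =>
        msubst (A i) ![(MvPowerSeries.X i : MvPowerSeries (Fin d) (integralClosure ℤ_[p] K))]).foldr
          (Fadd2 F) 0 := by
  have hcomm' : msubst h (fun i => msubst u ![MvPowerSeries.X i]) = msubst u ![h] := by
    have := hcomm
    unfold compEach substIn at this
    exact this
  exact MyAux.main_aux F hF u huE huS h h0 hcomm'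
end

section
/- Let F be a formal group law over O_K and let u be a stable endomorphism of F. Any two power series h⁽¹⁾, h⁽²⁾ ∈ X·K⟦X⟧ that commute with u under composition and satisfy (h⁽¹⁾)'(0) = (h⁽²⁾)'(0) are equal. In particular, two formal group laws over O_K that share a common stable endomorphism must be equal. -/
open MvPowerSeries

section Helpers

open Finsupp Finset

variable {R : Type*} [CommRing R]

lemma coeff_msubst {k l : ℕ} (f : MvPowerSeries (Fin k) R)
    (g : Fin k → MvPowerSeries (Fin l) R) (m : Fin l →₀ ℕ) :
    MvPowerSeries.coeff (R := R) m (msubst f g) =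
      ∑ e ∈ Finset.Iic (Finsupp.equivFunOnFinite.symm (fun _ : Fin k => m.degree)),
        (MvPowerSeries.coeff (R := R) e f) * MvPowerSeries.coeff (R := R) m (∏ i, g i ^ e i) := rfl

lemma mem_Iic_const {k : ℕ} (e : Fin k →₀ ℕ) (n : ℕ) :
    e ∈ Finset.Iic (Finsupp.equivFunOnFinite.symm (fun _ : Fin k => n)) ↔ ∀ i, e i ≤ n := by
  simp [Finset.mem_Iic, Finsupp.le_def]

lemma degree_eq_sum_fin {d : ℕ} (m : Fin d →₀ ℕ) : m.degree = ∑ i, m i := by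
  rw [Finsupp.degree]
  exact Finset.sum_subset (Finset.subset_univ m.support)
    (fun x _ hx => Finsupp.notMem_support_iff.mp hx)

lemma degree_finset_sum {d : ℕ} {ι : Type*} (s : Finset ι) (f : ι → (Fin d →₀ ℕ)) :
    (∑ t ∈ s, f t).degree = ∑ t ∈ s, (f t).degree := by
  simp only [degree_eq_sum_fin, Finsupp.finset_sum_apply]
  exact Finset.sum_comm

lemma coeff_zero_of_constantCoeff {σ : Type*} {f : MvPowerSeries σ R}
    (h : constantCoeff (σ := σ) (R := R) f = 0) : MvPowerSeries.coeff (R := R) 0 f = 0 := by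
  rw [MvPowerSeries.coeff_zero_eq_constantCoeff_apply]; exact h

lemma fin1_eq (m : Fin 1 →₀ ℕ) : m = Finsupp.single 0 (m 0) := by
  refine Finsupp.ext fun j => ?_
  have : j = 0 := Subsingleton.elim _ _
  subst this
  simp

lemma coeff_msubst_X {d : ℕ} (u : PS R) (i : Fin d) (m : Fin d →₀ ℕ) :
    MvPowerSeries.coeff (R := R) m (msubst u ![X i]) =
      if m = Finsupp.single i (m i) then MvPowerSeries.coeff (R := R) (Finsupp.single 0 (m i)) u
      else 0 := by
  classical
  have hrw : MvPowerSeries.coeff (R := R) m (msubst u ![X i]) =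
      ∑ e ∈ Finset.Iic (Finsupp.equivFunOnFinite.symm (fun _ : Fin 1 => m.degree)),
        (MvPowerSeries.coeff (R := R) e u) * (if m = Finsupp.single i (e 0) then 1 else 0) := by
    rw [coeff_msubst]
    refine Finset.sum_congr rfl fun e _ => ?_
    rw [Fin.prod_univ_one]
    simp [MvPowerSeries.coeff_X_pow]
  rw [hrw]
  by_cases h : m = Finsupp.single i (m i)
  · rw [if_pos h, Finset.sum_eq_single (Finsupp.single 0 (m i))]
    · rw [Finsupp.single_eq_same, if_pos h, mul_one]
    · intro e _ hne
      have hcond : ¬ m = Finsupp.single i (e 0) := by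
        intro hm2
        apply hne
        have h00 : e 0 = m i := by rw [hm2, Finsupp.single_eq_same]
        rw [fin1_eq e, h00]
      rw [if_neg hcond, mul_zero]
    · intro habs
      refine absurd ((mem_Iic_const _ _).mpr (fun j => ?_)) habs
      have hj : j = 0 := Subsingleton.elim _ _
      subst hj
      rw [Finsupp.single_eq_same]
      exact Finsupp.le_degree i m
  · rw [if_neg h]
    apply Finset.sum_eq_zero
    intro e _
    have hcond : ¬ m = Finsupp.single i (e 0) := by
      intro hm2
      apply h
      have h00 : m i = e 0 := by rw [hm2, Finsupp.single_eq_same]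
      rw [h00]; exact hm2
    rw [if_neg hcond, mul_zero]

lemma constantCoeff_msubst_X {d : ℕ} (u : PS R) (hu0 : constantCoeff (R := R) u = 0) (i : Fin d) :
    constantCoeff (R := R) (msubst u ![X i]) = 0 := by
  rw [← MvPowerSeries.coeff_zero_eq_constantCoeff_apply, coeff_msubst_X]
  simp only [Finsupp.coe_zero, Pi.zero_apply, Finsupp.single_zero, if_pos rfl]
  exact coeff_zero_of_constantCoeff hu0

lemma coeff_pow_msubst_X_ne {d : ℕ} (u : PS R) (i : Fin d) (j : ℕ) {m : Fin d →₀ ℕ}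
    (hm : m ≠ Finsupp.single i (m i)) :
    MvPowerSeries.coeff (R := R) m ((msubst u ![X i]) ^ j) = 0 := by
  classical
  rw [MvPowerSeries.coeff_pow]
  apply Finset.sum_eq_zero
  intro l hl
  rw [Finset.mem_finsuppAntidiag] at hl
  by_cases hA : ∀ t ∈ Finset.range j, l t = Finsupp.single i (l t i)
  · exfalso
    apply hm
    ext s
    by_cases hs : s = i
    · subst hs; simp
    · rw [Finsupp.single_apply, if_neg (Ne.symm hs)]
      have : m s = ∑ t ∈ Finset.range j, l t s := by rw [← hl.1, Finsupp.finset_sum_apply]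
      rw [this]
      apply Finset.sum_eq_zero
      intro t ht
      rw [hA t ht, Finsupp.single_apply, if_neg (Ne.symm hs)]
  · push_neg at hA
    obtain ⟨t₀, ht₀, hne⟩ := hA
    apply Finset.prod_eq_zero ht₀
    rw [coeff_msubst_X, if_neg hne]

lemma coeff_pow_msubst_X_lt {d : ℕ} (u : PS R) (hu0 : constantCoeff (R := R) u = 0) (i : Fin d)
    {j : ℕ} {m : Fin d →₀ ℕ} (h : m.degree < j) :
    MvPowerSeries.coeff (R := R) m ((msubst u ![X i]) ^ j) = 0 := by
  apply MvPowerSeries.coeff_eq_zero_of_constantCoeff_nilpotent (m := 1)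
  · rw [pow_one]; exact constantCoeff_msubst_X u hu0 i
  · omega

lemma coeff_pow_msubst_X_self {d : ℕ} (u : PS R) (hu0 : constantCoeff (R := R) u = 0)
    (i : Fin d) (j : ℕ) :
    MvPowerSeries.coeff (R := R) (Finsupp.single i j) ((msubst u ![X i]) ^ j) = (d0 u) ^ j := by
  classical
  rw [MvPowerSeries.coeff_pow]
  set l₀ : ℕ →₀ (Fin d →₀ ℕ) :=
      ∑ t ∈ Finset.range j, Finsupp.single t (Finsupp.single i 1) with hl₀
  have hl₀app : ∀ t, l₀ t = if t ∈ Finset.range j then Finsupp.single i 1 else 0 := by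
    intro t
    rw [hl₀, Finsupp.finset_sum_apply]
    simp only [Finsupp.single_apply]
    rw [Finset.sum_ite_eq' (Finset.range j) t (fun _ => Finsupp.single i 1)]
  have hmem : l₀ ∈ Finset.finsuppAntidiag (Finset.range j) (Finsupp.single i j) := by
    rw [Finset.mem_finsuppAntidiag]
    constructor
    · rw [Finset.sum_congr rfl (fun t ht => by rw [hl₀app t, if_pos ht]),
        Finset.sum_const, Finset.card_range, smul_single, smul_eq_mul, mul_one]
    · intro t ht
      rw [Finsupp.mem_support_iff] at ht
      by_contra hcon
      exact ht (by rw [hl₀app t, if_neg hcon])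
  rw [Finset.sum_eq_single l₀]
  · have : ∀ t ∈ Finset.range j,
        MvPowerSeries.coeff (R := R) (l₀ t) (msubst u ![X i]) = d0 u := by
      intro t ht
      rw [hl₀app t, if_pos ht, coeff_msubst_X]
      simp [d0]
    rw [Finset.prod_congr rfl this, Finset.prod_const, Finset.card_range]
  · intro l hl hlne
    rw [Finset.mem_finsuppAntidiag] at hl
    by_cases hz : ∃ t ∈ Finset.range j, MvPowerSeries.coeff (R := R) (l t) (msubst u ![X i]) = 0
    · obtain ⟨t, ht, h0⟩ := hz
      exact Finset.prod_eq_zero ht h0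
    · exfalso
      push_neg at hz
      have hstep : ∀ t ∈ Finset.range j, l t = Finsupp.single i (l t i) ∧ 1 ≤ l t i := by
        intro t ht
        have h0 := hz t ht
        rw [coeff_msubst_X] at h0
        by_cases hc : l t = Finsupp.single i (l t i)
        · refine ⟨hc, ?_⟩
          rcases Nat.eq_zero_or_pos (l t i) with h | h
          · exfalso; apply h0; rw [if_pos hc, h, Finsupp.single_zero]
            exact coeff_zero_of_constantCoeff hu0
          · exact h
        · exact absurd (by rw [if_neg hc]) h0
      have hsum : ∑ t ∈ Finset.range j, l t i = j := by
        have : (∑ t ∈ Finset.range j, l t) i = (Finsupp.single i j : Fin d →₀ ℕ) i := by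
          rw [hl.1]
        rwa [Finsupp.finset_sum_apply, Finsupp.single_eq_same] at this
      have hone : ∀ t ∈ Finset.range j, l t i = 1 := by
        by_contra hcon
        push_neg at hcon
        obtain ⟨t₁, ht₁, hne1⟩ := hcon
        have h2 : 2 ≤ l t₁ i := by
          have := (hstep t₁ ht₁).2; omega
        have : j + 1 ≤ ∑ t ∈ Finset.range j, l t i := by
          calc j + 1 = (∑ _t ∈ Finset.range j, 1) + 1 := by
                rw [Finset.sum_const, Finset.card_range, smul_eq_mul, mul_one]
            _ ≤ _ := by
                rw [← Finset.sum_erase_add _ _ ht₁, ← Finset.sum_erase_add _ (fun t => l t i) ht₁]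
                have h1 : ∑ t ∈ (Finset.range j).erase t₁, 1 ≤
                    ∑ t ∈ (Finset.range j).erase t₁, l t i :=
                  Finset.sum_le_sum (fun t ht =>
                    (hstep t (Finset.mem_of_mem_erase ht)).2)
                omega
        omega
      apply hlne
      ext t s
      by_cases ht : t ∈ Finset.range j
      · rw [hl₀app t, if_pos ht, (hstep t ht).1, hone t ht]
      · have h1 : l t = 0 := by
          by_contra hcon
          exact ht (hl.2 (Finsupp.mem_support_iff.mpr hcon))
        rw [hl₀app t, if_neg ht, h1]
  · intro habs
    exact absurd hmem habs

lemma coeff_pow_congr {d : ℕ} {h₁ h₂ : MvPowerSeries (Fin d) R}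
    (hc1 : constantCoeff (R := R) h₁ = 0) (hc2 : constantCoeff (R := R) h₂ = 0)
    {n : ℕ} (IH : ∀ m' : Fin d →₀ ℕ, m'.degree < n →
      MvPowerSeries.coeff (R := R) m' h₁ = MvPowerSeries.coeff (R := R) m' h₂)
    (m : Fin d →₀ ℕ) (hm : m.degree = n) {j : ℕ} (hj : j ≠ 1) :
    MvPowerSeries.coeff (R := R) m (h₁ ^ j) = MvPowerSeries.coeff (R := R) m (h₂ ^ j) := by
  classical
  match j, hj with
  | 0, _ => rw [pow_zero, pow_zero]
  | (k+2), _ =>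
    set j := k + 2 with hjdef
    rw [MvPowerSeries.coeff_pow, MvPowerSeries.coeff_pow]
    apply Finset.sum_congr rfl
    intro l hl
    rw [Finset.mem_finsuppAntidiag] at hl
    by_cases hA : ∀ t ∈ Finset.range j, (l t).degree < n
    · exact Finset.prod_congr rfl (fun t ht => IH _ (hA t ht))
    · push_neg at hA
      obtain ⟨t₀, ht₀, ht₀'⟩ := hA
      have hsum : ∑ t ∈ Finset.range j, (l t).degree = n := by
        rw [← degree_finset_sum, hl.1, hm]
      have hz : ∀ t ∈ Finset.range j, t ≠ t₀ → l t = 0 := by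
        intro t ht hne
        have h1 : ∑ t ∈ (Finset.range j).erase t₀, (l t).degree + (l t₀).degree = n := by
          rw [Finset.sum_erase_add _ _ ht₀]; exact hsum
        have h2 : ∑ t ∈ (Finset.range j).erase t₀, (l t).degree = 0 := by omega
        have h3 := (Finset.sum_eq_zero_iff.mp h2) t (Finset.mem_erase.mpr ⟨hne, ht⟩)
        exact (Finsupp.degree_eq_zero_iff _).mp h3
      obtain ⟨t₁, ht₁, hne₁⟩ : ∃ t₁ ∈ Finset.range j, t₁ ≠ t₀ := by
        by_cases h : t₀ = 0
        · exact ⟨1, by rw [Finset.mem_range]; omega, by omega⟩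
        · exact ⟨0, by rw [Finset.mem_range]; omega, fun hc => h (by omega)⟩
      rw [Finset.prod_eq_zero ht₁ (by
            rw [hz t₁ ht₁ hne₁]
            exact coeff_zero_of_constantCoeff hc1),
        Finset.prod_eq_zero ht₁ (by
            rw [hz t₁ ht₁ hne₁]
            exact coeff_zero_of_constantCoeff hc2)]

lemma rigid [IsDomain R] {d : ℕ} (u : PS R)
    (hu0 : constantCoeff (R := R) u = 0) (ha0 : d0 u ≠ 0)
    (ha1 : ∀ n : ℕ, 0 < n → (d0 u) ^ n ≠ 1)
    (h₁ h₂ : MvPowerSeries (Fin d) R)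
    (hc1 : constantCoeff (R := R) h₁ = 0) (hc2 : constantCoeff (R := R) h₂ = 0)
    (e1 : substIn u h₁ = compEach h₁ u) (e2 : substIn u h₂ = compEach h₂ u)
    (low : ∀ m : Fin d →₀ ℕ, m.degree ≤ 1 →
      MvPowerSeries.coeff (R := R) m h₁ = MvPowerSeries.coeff (R := R) m h₂) :
    h₁ = h₂ := by
  classical
  suffices H : ∀ n : ℕ, ∀ m : Fin d →₀ ℕ, m.degree = n →
      MvPowerSeries.coeff (R := R) m h₁ = MvPowerSeries.coeff (R := R) m h₂ by
    ext m
    exact H m.degree m rfl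
  intro n
  induction n using Nat.strong_induction_on with
  | _ n IH =>
    intro m hm
    by_cases hn1 : n ≤ 1
    · exact low m (hm ▸ hn1)
    push_neg at hn1
    have IH' : ∀ m' : Fin d →₀ ℕ, m'.degree < n →
        MvPowerSeries.coeff (R := R) m' h₁ = MvPowerSeries.coeff (R := R) m' h₂ :=
      fun m' hlt => IH m'.degree hlt m' rfl
    set a := d0 u with ha
    -- the left side: coeff of u ∘ h
    have L : ∀ h : MvPowerSeries (Fin d) R,
        MvPowerSeries.coeff (R := R) m (substIn u h)
          = a * MvPowerSeries.coeff (R := R) m h +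
            ∑ e ∈ (Finset.Iic (Finsupp.equivFunOnFinite.symm
                (fun _ : Fin 1 => m.degree))).erase (Finsupp.single 0 1),
              MvPowerSeries.coeff (R := R) e u * MvPowerSeries.coeff (R := R) m (h ^ (e 0)) := by
      intro h
      have hmem : (Finsupp.single 0 1 : Fin 1 →₀ ℕ) ∈
          Finset.Iic (Finsupp.equivFunOnFinite.symm (fun _ : Fin 1 => m.degree)) := by
        rw [mem_Iic_const]
        intro i
        have : i = 0 := Subsingleton.elim _ _
        subst this
        rw [Finsupp.single_eq_same]
        omega
      have hall : ∀ e : Fin 1 →₀ ℕ, (∏ i, (![h] : Fin 1 → MvPowerSeries (Fin d) R) i ^ e i)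
          = h ^ (e 0) := by
        intro e
        rw [Fin.prod_univ_one]
        simp
      rw [show substIn u h = msubst u ![h] from rfl, coeff_msubst]
      simp only [hall]
      rw [← Finset.add_sum_erase _ _ hmem]
      congr 1
      rw [Finsupp.single_eq_same, pow_one, ha]
      rfl
    -- the right side: coeff of h ∘ (u,...,u)
    have hmemR : m ∈ Finset.Iic (Finsupp.equivFunOnFinite.symm
        (fun _ : Fin d => m.degree)) :=
      (mem_Iic_const _ _).mpr (fun j => Finsupp.le_degree j m)
    have Rr : ∀ h : MvPowerSeries (Fin d) R,
        MvPowerSeries.coeff (R := R) m (compEach h u)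
          = MvPowerSeries.coeff (R := R) m h *
              MvPowerSeries.coeff (R := R) m (∏ i, (msubst u ![X i]) ^ (m i)) +
            ∑ e ∈ (Finset.Iic (Finsupp.equivFunOnFinite.symm
                (fun _ : Fin d => m.degree))).erase m,
              MvPowerSeries.coeff (R := R) e h *
                MvPowerSeries.coeff (R := R) m (∏ i, (msubst u ![X i]) ^ (e i)) := by
      intro h
      rw [show compEach h u = msubst h (fun i => msubst u ![X i]) from rfl, coeff_msubst,
        ← Finset.add_sum_erase _ _ hmemR]
    -- value of the main coefficient on the right side
    have hcm : MvPowerSeries.coeff (R := R) m (∏ i, (msubst u ![X i]) ^ (m i)) = a ^ n := by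
      rw [show (∏ i, (msubst u ![X i]) ^ (m i)) =
        ∏ i ∈ Finset.univ, (msubst u ![X i]) ^ (m i) from rfl, MvPowerSeries.coeff_prod]
      set l₀ : Fin d →₀ (Fin d →₀ ℕ) :=
        Finsupp.equivFunOnFinite.symm (fun t => Finsupp.single t (m t)) with hl₀def
      have hl₀app : ∀ t, l₀ t = Finsupp.single t (m t) := fun t => rfl
      have hmem₀ : l₀ ∈ Finset.finsuppAntidiag Finset.univ m := by
        rw [Finset.mem_finsuppAntidiag]
        refine ⟨?_, Finset.subset_univ _⟩
        ext s
        rw [Finsupp.finset_sum_apply]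
        simp only [hl₀app, Finsupp.single_apply]
        rw [Finset.sum_ite_eq' Finset.univ s (fun t => m t), if_pos (Finset.mem_univ s)]
      rw [Finset.sum_eq_single l₀]
      · have : ∀ t ∈ Finset.univ, MvPowerSeries.coeff (R := R) (l₀ t) ((msubst u ![X t]) ^ (m t))
            = a ^ (m t) := by
          intro t _
          rw [hl₀app t, coeff_pow_msubst_X_self u hu0]
        rw [Finset.prod_congr rfl this, Finset.prod_pow_eq_pow_sum, ← degree_eq_sum_fin, hm]
      · intro l hl hlne
        rw [Finset.mem_finsuppAntidiag] at hl
        by_cases hA : ∀ t, l t = Finsupp.single t (l t t)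
        · exfalso
          apply hlne
          have hval : ∀ t, l t t = m t := by
            intro t
            have h4 : (∑ t' ∈ Finset.univ, l t') t = m t := by rw [hl.1]
            rw [Finsupp.finset_sum_apply] at h4
            calc l t t = ∑ t' ∈ Finset.univ, l t' t := by
                  rw [Finset.sum_congr rfl (fun t' _ => by rw [hA t', Finsupp.single_apply]),
                    Finset.sum_ite_eq' Finset.univ t (fun t' => l t' t'),
                    if_pos (Finset.mem_univ t)]
              _ = m t := h4
          ext t s
          rw [hl₀app t, hA t, hval t]
        · push_neg at hA
          obtain ⟨t₀, hne⟩ := hA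
          exact Finset.prod_eq_zero (Finset.mem_univ t₀) (coeff_pow_msubst_X_ne u t₀ _ hne)
      · intro habs
        exact absurd hmem₀ habs
    -- vanishing of the other "large" coefficients on the right side
    have hczero : ∀ e : Fin d →₀ ℕ, e ≠ m → n ≤ e.degree →
        MvPowerSeries.coeff (R := R) m (∏ i, (msubst u ![X i]) ^ (e i)) = 0 := by
      intro e hne hdeg
      rw [show (∏ i, (msubst u ![X i]) ^ (e i)) =
        ∏ i ∈ Finset.univ, (msubst u ![X i]) ^ (e i) from rfl, MvPowerSeries.coeff_prod]
      apply Finset.sum_eq_zero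
      intro l hl
      rw [Finset.mem_finsuppAntidiag] at hl
      by_cases hA : ∀ t, l t = Finsupp.single t (l t t)
      · have hval : ∀ t, l t t = m t := by
          intro t
          have h4 : (∑ t' ∈ Finset.univ, l t') t = m t := by rw [hl.1]
          rw [Finsupp.finset_sum_apply] at h4
          calc l t t = ∑ t' ∈ Finset.univ, l t' t := by
                rw [Finset.sum_congr rfl (fun t' _ => by rw [hA t', Finsupp.single_apply]),
                  Finset.sum_ite_eq' Finset.univ t (fun t' => l t' t'),
                  if_pos (Finset.mem_univ t)]
            _ = m t := h4
        obtain ⟨i, hi⟩ : ∃ i, m i < e i := by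
          by_contra hcon
          push_neg at hcon
          have hdege : e.degree ≤ m.degree := by
            rw [degree_eq_sum_fin, degree_eq_sum_fin]
            exact Finset.sum_le_sum (fun i _ => hcon i)
          have hdeq : e.degree = m.degree := le_antisymm hdege (hm ▸ hdeg)
          apply hne
          ext s
          have := (Finset.sum_eq_sum_iff_of_le (s := (Finset.univ : Finset (Fin d)))
            (f := fun i => e i) (g := fun i => m i) (fun i _ => hcon i)).mp
            (by rw [← degree_eq_sum_fin, ← degree_eq_sum_fin, hdeq])
          exact this s (Finset.mem_univ s)
        apply Finset.prod_eq_zero (Finset.mem_univ i)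
        rw [hA i, hval i]
        apply coeff_pow_msubst_X_lt u hu0
        rw [show (Finsupp.single i (m i)).degree = m i from by
          rw [degree_eq_sum_fin]
          simp [Finsupp.single_apply]]
        exact hi
      · push_neg at hA
        obtain ⟨t₀, hne₀⟩ := hA
        exact Finset.prod_eq_zero (Finset.mem_univ t₀) (coeff_pow_msubst_X_ne u t₀ _ hne₀)
    -- compare the two expansions
    have E1 := congrArg (MvPowerSeries.coeff (R := R) m) e1
    have E2 := congrArg (MvPowerSeries.coeff (R := R) m) e2
    rw [L h₁, Rr h₁, hcm] at E1
    rw [L h₂, Rr h₂, hcm] at E2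
    -- the erased sums agree
    have hS : ∑ e ∈ (Finset.Iic (Finsupp.equivFunOnFinite.symm
          (fun _ : Fin 1 => m.degree))).erase (Finsupp.single 0 1),
        MvPowerSeries.coeff (R := R) e u * MvPowerSeries.coeff (R := R) m (h₁ ^ (e 0))
        = ∑ e ∈ (Finset.Iic (Finsupp.equivFunOnFinite.symm
          (fun _ : Fin 1 => m.degree))).erase (Finsupp.single 0 1),
        MvPowerSeries.coeff (R := R) e u * MvPowerSeries.coeff (R := R) m (h₂ ^ (e 0)) := by
      apply Finset.sum_congr rfl
      intro e he
      rw [Finset.mem_erase] at he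
      have he0 : e 0 ≠ 1 := by
        intro hcon
        apply he.1
        rw [fin1_eq e, hcon]
      rw [coeff_pow_congr hc1 hc2 IH' m hm he0]
    have hT : ∑ e ∈ (Finset.Iic (Finsupp.equivFunOnFinite.symm
          (fun _ : Fin d => m.degree))).erase m,
        MvPowerSeries.coeff (R := R) e h₁ *
          MvPowerSeries.coeff (R := R) m (∏ i, (msubst u ![X i]) ^ (e i))
        = ∑ e ∈ (Finset.Iic (Finsupp.equivFunOnFinite.symm
          (fun _ : Fin d => m.degree))).erase m,
        MvPowerSeries.coeff (R := R) e h₂ *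
          MvPowerSeries.coeff (R := R) m (∏ i, (msubst u ![X i]) ^ (e i)) := by
      apply Finset.sum_congr rfl
      intro e he
      rw [Finset.mem_erase] at he
      by_cases hdeg : e.degree < n
      · rw [IH' e hdeg]
      · push_neg at hdeg
        rw [hczero e he.1 hdeg, mul_zero, mul_zero]
    -- finish by cancellation
    have key : (a ^ n - a) * (MvPowerSeries.coeff (R := R) m h₁ - MvPowerSeries.coeff (R := R) m h₂) = 0 := by
      linear_combination E2 - E1 + hS - hT
    have hcane : a ^ n - a ≠ 0 := by
      intro hcon
      have han : a ^ n = a := sub_eq_zero.mp hcon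
      have : a ^ (n - 1) * a = 1 * a := by
        rw [one_mul, ← pow_succ]
        rw [show n - 1 + 1 = n from by omega, han]
      have := mul_right_cancel₀ ha0 this
      exact ha1 (n - 1) (by omega) this
    have := (mul_eq_zero.mp key).resolve_left hcane
    exact sub_eq_zero.mp this

lemma msubst_X_id (f : PS R) : msubst f ![(X 0 : PS R)] = f := by
  ext m
  rw [coeff_msubst_X, if_pos (fin1_eq m), ← fin1_eq m]

lemma compEach_one (h f : PS R) : compEach h f = comp h f := by
  have hfun : (fun i : Fin 1 => msubst f ![(X i : PS R)]) = ![f] := by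
    funext i
    have hi : i = 0 := Subsingleton.elim _ _
    subst hi
    simp [msubst_X_id]
  show msubst h (fun i : Fin 1 => msubst f ![X i]) = msubst h ![f]
  rw [hfun]

lemma compEach_two (h : MvPowerSeries (Fin 2) R) (f : PS R) :
    compEach h f = msubst h ![msubst f ![(X 0 : MvPowerSeries (Fin 2) R)],
      msubst f ![(X 1 : MvPowerSeries (Fin 2) R)]] := by
  have hfun : (fun i : Fin 2 => msubst f ![(X i : MvPowerSeries (Fin 2) R)])
      = ![msubst f ![(X 0 : MvPowerSeries (Fin 2) R)],
          msubst f ![(X 1 : MvPowerSeries (Fin 2) R)]] := by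
    funext i
    fin_cases i <;> simp
  show msubst h (fun i : Fin 2 => msubst f ![X i]) = _
  rw [hfun]

end Helpers

variable (p : ℕ) [Fact p.Prime] (K : Type*) [Field K] [Algebra ℚ_[p] K]
  [Algebra ℤ_[p] K] [IsScalarTower ℤ_[p] ℚ_[p] K] [FiniteDimensional ℚ_[p] K]

/-- Rigidity for a formal group law with a stable endomorphism `u`: any two power
series in `X·K⟦X⟧` that commute with `u` and have the same derivative at `0` are
equal; in particular, two formal group laws over `O_K` sharing the common stable
endomorphism `u` are equal. -/
theorem stmt7 (F G : MvPowerSeries (Fin 2) (integralClosure ℤ_[p] K))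
    (hF : IsFGL F) (hG : IsFGL G)
    (u : PS (integralClosure ℤ_[p] K)) (huS : Stable u)
    (huF : IsEndoFGL F u) (huG : IsEndoFGL G u) :
    (∀ h₁ h₂ : PS K,
      constantCoeff (R := K) h₁ = 0 → constantCoeff (R := K) h₂ = 0 →
      comp h₁ (MvPowerSeries.map (algebraMap (integralClosure ℤ_[p] K) K) u)
        = comp (MvPowerSeries.map (algebraMap (integralClosure ℤ_[p] K) K) u) h₁ →
      comp h₂ (MvPowerSeries.map (algebraMap (integralClosure ℤ_[p] K) K) u)
        = comp (MvPowerSeries.map (algebraMap (integralClosure ℤ_[p] K) K) u) h₂ →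
      d0 h₁ = d0 h₂ → h₁ = h₂) ∧
    F = G := by
  classical
  obtain ⟨hu0, ha0, ha1⟩ := huS
  have hφ : Function.Injective (algebraMap (integralClosure ℤ_[p] K) K) :=
    fun a b h => Subtype.ext h
  constructor
  · -- one-variable rigidity over K
    intro h₁ h₂ hc1 hc2 hcomm1 hcomm2 hd
    set uK : PS K := MvPowerSeries.map (algebraMap (integralClosure ℤ_[p] K) K) u with huK
    have hu0K : constantCoeff (R := K) uK = 0 := by
      rw [← MvPowerSeries.coeff_zero_eq_constantCoeff_apply, huK, MvPowerSeries.coeff_map,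
        MvPowerSeries.coeff_zero_eq_constantCoeff_apply, hu0, map_zero]
    have hd0K : d0 uK = algebraMap (integralClosure ℤ_[p] K) K (d0 u) := by
      show MvPowerSeries.coeff (R := K) (Finsupp.single 0 1) uK = _
      rw [huK, MvPowerSeries.coeff_map]
      rfl
    refine rigid uK hu0K ?_ ?_ h₁ h₂ hc1 hc2 ?_ ?_ ?_
    · rw [hd0K]
      intro hcon
      exact ha0 (hφ (by rw [hcon, map_zero]))
    · intro n hn hcon
      rw [hd0K, ← map_pow] at hcon
      exact ha1 n hn (hφ (by rw [hcon, map_one]))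
    · rw [compEach_one]
      exact hcomm1.symm
    · rw [compEach_one]
      exact hcomm2.symm
    · intro m hm
      have hdeg : m.degree = m 0 := by rw [degree_eq_sum_fin, Fin.sum_univ_one]
      rw [hdeg] at hm
      rcases Nat.le_one_iff_eq_zero_or_eq_one.mp hm with h | h
      · have hm0 : m = 0 := by rw [fin1_eq m, h, Finsupp.single_zero]
        rw [hm0, coeff_zero_of_constantCoeff hc1, coeff_zero_of_constantCoeff hc2]
      · have hm0 : m = Finsupp.single 0 1 := by rw [fin1_eq m, h]
        rw [hm0]
        exact hd
  · -- the two formal group laws coincide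
    have hcF : constantCoeff F = 0 := by
      have h0 := hF.left 0
      rw [Finsupp.single_zero, if_neg (by norm_num)] at h0
      rw [← MvPowerSeries.coeff_zero_eq_constantCoeff_apply]
      exact h0
    have hcG : constantCoeff G = 0 := by
      have h0 := hG.left 0
      rw [Finsupp.single_zero, if_neg (by norm_num)] at h0
      rw [← MvPowerSeries.coeff_zero_eq_constantCoeff_apply]
      exact h0
    refine rigid u hu0 ha0 ha1 F G hcF hcG ?_ ?_ ?_
    · rw [compEach_two]
      exact huF.2
    · rw [compEach_two]
      exact huG.2
    · intro m hm
      have hdeg : m.degree = m 0 + m 1 := by rw [degree_eq_sum_fin, Fin.sum_univ_two]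
      rw [hdeg] at hm
      by_cases h1 : m 1 = 0
      · have hm0 : m = Finsupp.single 0 (m 0) := by
          refine Finsupp.ext fun j => ?_
          fin_cases j <;> simp [Finsupp.single_apply, h1]
        rw [hm0, hF.left, hG.left]
      · have h10 : m 0 = 0 := by omega
        have hm0 : m = Finsupp.single 1 (m 1) := by
          refine Finsupp.ext fun j => ?_
          fin_cases j <;> simp [Finsupp.single_apply, h10]
        rw [hm0, hF.right, hG.right]
end
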